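/- arXiv:2107.13426 — 7 statements merged into one kernel-verified Lean document; each statement's English description precedes it below -/
import Mathlib

section
/- Let A be an N×N complex Hermitian matrix and let B be the (N−1)×(N−1) principal submatrix of A obtained by deleting the k-th row and k-th column, for some fixed index k. Let a_1 ≥ a_2 ≥ … ≥ a_N be the eigenvalues of A and b_1 ≥ … ≥ b_{N−1} the eigenvalues of B, each listed in decreasing order with multiplicity. Then the eigenvalues interlace: a_{j+1} ≤ b_j ≤ a_j for every j = 1, …, N−1. -/
/-!
Min–max by dimension counting. Extension by zero along `k.succAbove` is an isometry `P` with
`⟪P y, A (P y)⟫ = ⟪y, B y⟫`. The eigenvectors of `A` with eigenvalue `≥ a_{j+1}` span a space of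
dimension `≥ j + 1`, and `P` maps the span of the eigenvectors of `B` with eigenvalue `≤ b_j` to a
space of dimension `≥ n - j`. In dimension `n + 1` these two spaces share some `P y ≠ 0`, whence
`a_{j+1} ‖y‖² ≤ ⟪y, B y⟫ ≤ b_j ‖y‖²`. The inequality `b_j ≤ a_j` is the mirror image.
-/

open Module Submodule Finset

lemma Submodule.exists_ne_zero_mem_of_finrank_lt_add {K V : Type*} [DivisionRing K]
    [AddCommGroup V] [Module K V] [FiniteDimensional K V] {s t : Submodule K V}
    (h : finrank K V < finrank K s + finrank K t) : ∃ x ≠ 0, x ∈ s ∧ x ∈ t := by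
  by_contra! H
  refine h.not_ge (finrank_add_finrank_le_of_disjoint (disjoint_def.2 fun x hs ht => ?_))
  exact by_contra fun hx => H x hx hs ht

lemma card_filter_eq_of_map_eq {α β γ : Type*} [Fintype α] [Fintype β] {f : α → γ} {g : β → γ}
    (h : univ.val.map f = univ.val.map g) (p : γ → Prop) [DecidablePred p] :
    #{i | p (f i)} = #{i | p (g i)} := by
  have := congrArg (Multiset.countP p) h
  rwa [Multiset.countP_map, Multiset.countP_map] at this

section Antitone

variable {α ι : Type*} [Preorder α] [DecidableLE α] [Fintype ι] {N : ℕ} {a : Fin N → α}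
  {μ : ι → α}

lemma Antitone.succ_le_card_filter_le_of_map_eq (ha : Antitone a)
    (h : univ.val.map a = univ.val.map μ) (j : Fin N) : j + 1 ≤ #{i | a j ≤ μ i} := by
  rw [← card_filter_eq_of_map_eq h (a j ≤ ·), ← Fin.card_Iic j]
  exact card_le_card fun i hi => by simpa using ha (mem_Iic.1 hi)

lemma Antitone.sub_le_card_filter_ge_of_map_eq (ha : Antitone a)
    (h : univ.val.map a = univ.val.map μ) (j : Fin N) : N - j ≤ #{i | μ i ≤ a j} := by
  rw [← card_filter_eq_of_map_eq h (· ≤ a j), ← Fin.card_Ici j]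
  exact card_le_card fun i hi => by simpa using ha (mem_Ici.1 hi)

end Antitone

namespace Matrix

variable {𝕜 : Type*} [RCLike 𝕜]

local notation "⟪" x ", " y "⟫" => @inner 𝕜 _ _ x y

section Eigenvectors

variable {m : Type*} [Fintype m] [DecidableEq m] {A : Matrix m m 𝕜} (hA : A.IsHermitian)

lemma IsHermitian.map_eigenvalues_eq_of_roots_charpoly {f : m → ℝ}
    (h : A.charpoly.roots = univ.val.map fun i => (f i : 𝕜)) :
    univ.val.map f = univ.val.map hA.eigenvalues := by
  apply Multiset.map_injective (RCLike.ofReal_injective (K := 𝕜))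
  rw [Multiset.map_map, Multiset.map_map, ← hA.roots_charpoly_eq_eigenvalues, h]
  rfl

lemma IsHermitian.toEuclideanLin_eigenvectorBasis (i : m) :
    toEuclideanLin A (hA.eigenvectorBasis i)
      = (hA.eigenvalues i : 𝕜) • hA.eigenvectorBasis i := by
  apply WithLp.ofLp_injective
  rw [ofLp_toLpLin, toLin'_apply, hA.mulVec_eigenvectorBasis, WithLp.ofLp_smul,
    RCLike.real_smul_eq_coe_smul (K := 𝕜)]

lemma IsHermitian.re_inner_toEuclideanLin_eq_sum (x : EuclideanSpace 𝕜 m) :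
    RCLike.re ⟪x, toEuclideanLin A x⟫
      = ∑ i, hA.eigenvalues i * ‖⟪hA.eigenvectorBasis i, x⟫‖ ^ 2 := by
  have hT : (toEuclideanLin A).IsSymmetric := isSymmetric_toEuclideanLin_iff.2 hA
  rw [← hA.eigenvectorBasis.sum_inner_mul_inner, map_sum]
  refine sum_congr rfl fun i _ => ?_
  rw [← hT, hA.toEuclideanLin_eigenvectorBasis, inner_smul_left, ← inner_conj_symm x,
    RCLike.conj_ofReal, mul_left_comm, RCLike.conj_mul]
  norm_cast

noncomputable def IsHermitian.eigenvectorSpan (S : Finset m) :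
    Submodule 𝕜 (EuclideanSpace 𝕜 m) :=
  span 𝕜 (Set.range fun i : S => hA.eigenvectorBasis i)

lemma IsHermitian.finrank_eigenvectorSpan (S : Finset m) :
    finrank 𝕜 (hA.eigenvectorSpan S) = #S := by
  rw [IsHermitian.eigenvectorSpan, finrank_span_eq_card, Fintype.card_coe]
  exact hA.eigenvectorBasis.orthonormal.linearIndependent.comp _ Subtype.val_injective

lemma IsHermitian.inner_eigenvectorBasis_eq_zero {S : Finset m} {x : EuclideanSpace 𝕜 m}
    (hx : x ∈ hA.eigenvectorSpan S) {i : m} (hi : i ∉ S) : ⟪hA.eigenvectorBasis i, x⟫ = 0 := by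
  suffices hA.eigenvectorSpan S ≤ (𝕜 ∙ hA.eigenvectorBasis i)ᗮ from
    mem_orthogonal_singleton_iff_inner_right.1 (this hx)
  refine span_le.2 (Set.range_subset_iff.2 fun j => ?_)
  exact mem_orthogonal_singleton_iff_inner_right.2
    (hA.eigenvectorBasis.orthonormal.2 fun h => hi (h ▸ j.2))

lemma IsHermitian.sum_eq_sum_of_mem_eigenvectorSpan {S : Finset m} {x : EuclideanSpace 𝕜 m}
    (hx : x ∈ hA.eigenvectorSpan S) (f : m → ℝ) :
    ∑ i ∈ S, f i * ‖⟪hA.eigenvectorBasis i, x⟫‖ ^ 2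
      = ∑ i, f i * ‖⟪hA.eigenvectorBasis i, x⟫‖ ^ 2 :=
  sum_subset (subset_univ S) fun i _ hi => by simp [hA.inner_eigenvectorBasis_eq_zero hx hi]

lemma IsHermitian.re_inner_toEuclideanLin_le {S : Finset m} {c : ℝ}
    (hS : ∀ i ∈ S, hA.eigenvalues i ≤ c) {x : EuclideanSpace 𝕜 m}
    (hx : x ∈ hA.eigenvectorSpan S) :
    RCLike.re ⟪x, toEuclideanLin A x⟫ ≤ c * ‖x‖ ^ 2 := by
  rw [hA.re_inner_toEuclideanLin_eq_sum, ← hA.eigenvectorBasis.sum_sq_norm_inner_right,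
    mul_sum, ← hA.sum_eq_sum_of_mem_eigenvectorSpan hx,
    ← hA.sum_eq_sum_of_mem_eigenvectorSpan hx (fun _ => c)]
  gcongr with i hi
  exact hS i hi

lemma IsHermitian.le_re_inner_toEuclideanLin {S : Finset m} {c : ℝ}
    (hS : ∀ i ∈ S, c ≤ hA.eigenvalues i) {x : EuclideanSpace 𝕜 m}
    (hx : x ∈ hA.eigenvectorSpan S) :
    c * ‖x‖ ^ 2 ≤ RCLike.re ⟪x, toEuclideanLin A x⟫ := by
  rw [hA.re_inner_toEuclideanLin_eq_sum, ← hA.eigenvectorBasis.sum_sq_norm_inner_right,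
    mul_sum, ← hA.sum_eq_sum_of_mem_eigenvectorSpan hx (fun _ => c),
    ← hA.sum_eq_sum_of_mem_eigenvectorSpan hx]
  gcongr with i hi
  exact hS i hi

end Eigenvectors

section Compression

variable {ι κ : Type*} [Fintype κ] [DecidableEq κ]

lemma conjTranspose_mul_mul_submatrix_one (A : Matrix κ κ 𝕜) (e : ι → κ) :
    ((1 : Matrix κ κ 𝕜).submatrix id e)ᴴ * A * (1 : Matrix κ κ 𝕜).submatrix id e
      = A.submatrix e e := by
  ext i j
  simp [mul_apply, one_apply]

variable [Fintype ι] [DecidableEq ι]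

variable (𝕜) in
/-- Given by a matrix so that its adjoint is a conjugate transpose. -/
noncomputable def extendByZero (e : ι → κ) : EuclideanSpace 𝕜 ι →ₗ[𝕜] EuclideanSpace 𝕜 κ :=
  toEuclideanLin ((1 : Matrix κ κ 𝕜).submatrix id e)

lemma inner_extendByZero_toEuclideanLin (A : Matrix κ κ 𝕜) (e : ι → κ)
    (y : EuclideanSpace 𝕜 ι) :
    ⟪extendByZero 𝕜 e y, toEuclideanLin A (extendByZero 𝕜 e y)⟫
      = ⟪y, toEuclideanLin (A.submatrix e e) y⟫ := by
  rw [extendByZero, ← conjTranspose_mul_mul_submatrix_one, toLpLin_mul (q := 2),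
    toLpLin_mul (q := 2), toEuclideanLin_conjTranspose_eq_adjoint]
  simp only [LinearMap.coe_comp, Function.comp_apply, LinearMap.adjoint_inner_right]

lemma norm_extendByZero {e : ι → κ} (he : Function.Injective e) (y : EuclideanSpace 𝕜 ι) :
    ‖extendByZero 𝕜 e y‖ = ‖y‖ := by
  have h := inner_extendByZero_toEuclideanLin (1 : Matrix κ κ 𝕜) e y
  rw [submatrix_one e he, toLpLin_one, toLpLin_one] at h
  simp only [LinearMap.id_apply] at h
  rw [@norm_eq_sqrt_re_inner 𝕜, @norm_eq_sqrt_re_inner 𝕜, h]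

lemma extendByZero_injective {e : ι → κ} (he : Function.Injective e) :
    Function.Injective (extendByZero 𝕜 e) := fun y z h => by
  rw [← sub_eq_zero, ← norm_eq_zero, ← norm_extendByZero he, map_sub, h, sub_self, norm_zero]

variable {A : Matrix κ κ 𝕜} (hA : A.IsHermitian) {e : ι → κ}

lemma IsHermitian.exists_ne_zero_mem_eigenvectorSpan_submatrix (he : Function.Injective e)
    {S : Finset κ} {T : Finset ι} (hST : Fintype.card κ < #S + #T) :
    ∃ y ≠ 0, y ∈ (hA.submatrix e).eigenvectorSpan T ∧
      extendByZero 𝕜 e y ∈ hA.eigenvectorSpan S := by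
  have hdim : finrank 𝕜 (EuclideanSpace 𝕜 κ) < finrank 𝕜
      (((hA.submatrix e).eigenvectorSpan T).map (extendByZero 𝕜 e)) +
        finrank 𝕜 (hA.eigenvectorSpan S) := by
    rw [← (equivMapOfInjective _ (extendByZero_injective he) _).finrank_eq,
      finrank_euclideanSpace, IsHermitian.finrank_eigenvectorSpan,
      IsHermitian.finrank_eigenvectorSpan]
    omega
  obtain ⟨x, hx0, hxT, hxS⟩ := exists_ne_zero_mem_of_finrank_lt_add hdim
  obtain ⟨y, hyT, rfl⟩ := mem_map.1 hxT
  exact ⟨y, fun hy => hx0 (by rw [hy, map_zero]), hyT, hxS⟩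

lemma IsHermitian.le_of_lt_card_add_card_of_le_eigenvalues (he : Function.Injective e)
    {S : Finset κ} {T : Finset ι} (hST : Fintype.card κ < #S + #T) {c d : ℝ}
    (hS : ∀ i ∈ S, c ≤ hA.eigenvalues i) (hT : ∀ j ∈ T, (hA.submatrix e).eigenvalues j ≤ d) :
    c ≤ d := by
  obtain ⟨y, hy0, hyT, hyS⟩ := hA.exists_ne_zero_mem_eigenvectorSpan_submatrix he hST
  have hA' := hA.le_re_inner_toEuclideanLin hS hyS
  rw [inner_extendByZero_toEuclideanLin, norm_extendByZero he] at hA'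
  exact le_of_mul_le_mul_right (hA'.trans ((hA.submatrix e).re_inner_toEuclideanLin_le hT hyT))
    (by positivity)

lemma IsHermitian.le_of_lt_card_add_card_of_eigenvalues_le (he : Function.Injective e)
    {S : Finset κ} {T : Finset ι} (hST : Fintype.card κ < #S + #T) {c d : ℝ}
    (hS : ∀ i ∈ S, hA.eigenvalues i ≤ c) (hT : ∀ j ∈ T, d ≤ (hA.submatrix e).eigenvalues j) :
    d ≤ c := by
  obtain ⟨y, hy0, hyT, hyS⟩ := hA.exists_ne_zero_mem_eigenvectorSpan_submatrix he hST
  have hA' := hA.re_inner_toEuclideanLin_le hS hyS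
  rw [inner_extendByZero_toEuclideanLin, norm_extendByZero he] at hA'
  exact le_of_mul_le_mul_right (((hA.submatrix e).le_re_inner_toEuclideanLin hT hyT).trans hA')
    (by positivity)

end Compression

end Matrix

/-- **Cauchy interlace theorem.** If `A` is an `(n+1) × (n+1)` complex Hermitian matrix and
`B` is the principal submatrix obtained by deleting the `k`-th row and column, then the
eigenvalues of `A` (listed in decreasing order with multiplicity) interlace those of `B`. -/
theorem stmt0 (n : ℕ) (A : Matrix (Fin (n + 1)) (Fin (n + 1)) ℂ)
    (hA : A.IsHermitian) (k : Fin (n + 1))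
    (a : Fin (n + 1) → ℝ) (b : Fin n → ℝ)
    (ha_sorted : Antitone a) (hb_sorted : Antitone b)
    (ha_eig : (A.charpoly).roots = Multiset.map (fun i => (a i : ℂ)) Finset.univ.val)
    (hb_eig : ((A.submatrix k.succAbove k.succAbove).charpoly).roots
      = Multiset.map (fun i => (b i : ℂ)) Finset.univ.val) :
    ∀ j : Fin n, a j.succ ≤ b j ∧ b j ≤ a j.castSucc := by
  have he : Function.Injective k.succAbove := Fin.succAbove_right_injective
  have hB := hA.submatrix k.succAbove
  have hAa := hA.map_eigenvalues_eq_of_roots_charpoly ha_eig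
  have hBb := hB.map_eigenvalues_eq_of_roots_charpoly hb_eig
  intro j
  constructor
  · refine hA.le_of_lt_card_add_card_of_le_eigenvalues he
      (S := {i | a j.succ ≤ hA.eigenvalues i}) (T := {i | hB.eigenvalues i ≤ b j}) ?_
      (fun i hi => (mem_filter.1 hi).2) (fun i hi => (mem_filter.1 hi).2)
    have hS := ha_sorted.succ_le_card_filter_le_of_map_eq hAa j.succ
    have hT := hb_sorted.sub_le_card_filter_ge_of_map_eq hBb j
    simp only [Fintype.card_fin, Fin.val_succ] at hS ⊢
    omega
  · refine hA.le_of_lt_card_add_card_of_eigenvalues_le he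
      (S := {i | hA.eigenvalues i ≤ a j.castSucc}) (T := {i | b j ≤ hB.eigenvalues i}) ?_
      (fun i hi => (mem_filter.1 hi).2) (fun i hi => (mem_filter.1 hi).2)
    have hS := ha_sorted.sub_le_card_filter_ge_of_map_eq hAa j.castSucc
    have hT := hb_sorted.succ_le_card_filter_le_of_map_eq hBb j
    simp only [Fintype.card_fin, Fin.val_castSucc] at hS ⊢
    omega
end

section
/- Let Q be an N×N complex Hermitian positive definite matrix and A an N×N complex Hermitian matrix. Fix an index k and let Q′, A′ be the (N−1)×(N−1) principal submatrices of Q and A obtained by deleting the k-th row and column of each. Then all eigenvalues of Q⁻¹A and of Q′⁻¹A′ are real, and listing them in decreasing order with multiplicity as a_1 ≥ … ≥ a_N and b_1 ≥ … ≥ b_{N−1}, they interlace: a_{j+1} ≤ b_j ≤ a_j for every j = 1, …, N−1. -/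
/-!
A `Q`-orthonormal basis `V` of eigenvectors of `Q⁻¹A` turns the pencil into `VᴴQV = 1` and
`VᴴAV = diag μ`, so `Q⁻¹A = V diag μ V⁻¹` has the real spectrum `μ`; such a basis comes from the
spectral theorem for `Q^{-1/2} A Q^{-1/2}`. For the submatrices, padding the basis vectors of the
smaller pencil with a zero in coordinate `k` keeps both identities for `Q` and `A`. Interlacing is
the Courant–Fischer dimension count: the eigenvectors of `Q⁻¹A` for `a₁, …, a_{j+1}` and those of
`Q′⁻¹A′` for `b_j, …, b_{N-1}` are `N + 1` vectors in `ℂᴺ`, so their spans share a vector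
`x ≠ 0`, whose Rayleigh quotient `x*Ax / x*Qx` is then both `≥ a_{j+1}` and `≤ b_j`.
-/

open Matrix Polynomial
open scoped ComplexOrder

theorem sum_norm_sq_pos {𝕜 ι : Type*} [RCLike 𝕜] [Fintype ι] {g : ι → 𝕜} (hg : g ≠ 0) :
    0 < ∑ i, ‖g i‖ ^ 2 := by
  obtain ⟨i, hi⟩ := Function.ne_iff.mp hg
  exact Finset.sum_pos' (fun j _ => by positivity) ⟨i, Finset.mem_univ i, by positivity⟩

namespace Matrix

variable {𝕜 m ι κ : Type*} [RCLike 𝕜] [Fintype m]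

def DiagonalizesPencil [DecidableEq ι] (Q A : Matrix m m 𝕜) (V : Matrix m ι 𝕜) (μ : ι → ℝ) :
    Prop :=
  Vᴴ * Q * V = 1 ∧ Vᴴ * A * V = diagonal fun i => (μ i : 𝕜)

theorem conjTranspose_submatrix_mul_mul_submatrix (U : Matrix m κ 𝕜) (B : Matrix m m 𝕜)
    (f : ι → κ) :
    (U.submatrix id f)ᴴ * B * U.submatrix id f = (Uᴴ * B * U).submatrix f f := by
  rw [conjTranspose_submatrix, submatrix_mul _ _ _ _ _ Function.bijective_id,
    submatrix_mul _ _ _ _ _ Function.bijective_id, submatrix_id_id]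

theorem star_mulVec_dotProduct_mulVec_of_diagonal [Fintype ι] [DecidableEq ι]
    {V : Matrix m ι 𝕜} {B : Matrix m m 𝕜} {t : ι → ℝ}
    (h : Vᴴ * B * V = diagonal fun i => (t i : 𝕜)) (g : ι → 𝕜) :
    star (V *ᵥ g) ⬝ᵥ B *ᵥ (V *ᵥ g) = ((∑ i, ‖g i‖ ^ 2 * t i : ℝ) : 𝕜) := by
  rw [star_mulVec, ← dotProduct_mulVec, mulVec_mulVec, mulVec_mulVec, h]
  simp only [dotProduct, mulVec_diagonal, Pi.star_apply, RCLike.ofReal_sum, RCLike.ofReal_mul,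
    RCLike.ofReal_pow, ← RCLike.conj_mul]
  exact Finset.sum_congr rfl fun i _ => by rw [RCLike.star_def]; ring

theorem exists_mulVec_eq_mulVec_of_card_lt [Fintype ι] [Fintype κ] (V : Matrix m ι 𝕜)
    (W : Matrix m κ 𝕜) (h : Fintype.card m < Fintype.card ι + Fintype.card κ) :
    ∃ g e, (g ≠ 0 ∨ e ≠ 0) ∧ V *ᵥ g = W *ᵥ e := by
  have hker : LinearMap.ker (fromCols V W).mulVecLin ≠ ⊥ :=
    LinearMap.ker_ne_bot_of_finrank_lt (by simpa using h)
  obtain ⟨v, hv, hv0⟩ := (Submodule.ne_bot_iff _).mp hker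
  refine ⟨v ∘ Sum.inl, -(v ∘ Sum.inr), ?_, ?_⟩
  · by_contra! h0
    exact hv0 (funext fun | .inl i => congrFun h0.1 i | .inr j => by simpa using congrFun h0.2 j)
  · rw [mulVec_neg, eq_neg_iff_add_eq_zero, ← fromCols_mulVec]
    exact hv

namespace DiagonalizesPencil

variable [DecidableEq ι] {Q A : Matrix m m 𝕜} {V : Matrix m ι 𝕜} {μ : ι → ℝ}

theorem submatrix (h : DiagonalizesPencil Q A V μ) {f : κ → ι} [DecidableEq κ]
    (hf : Function.Injective f) : DiagonalizesPencil Q A (V.submatrix id f) (μ ∘ f) := by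
  refine ⟨?_, ?_⟩
  · rw [conjTranspose_submatrix_mul_mul_submatrix, h.1, submatrix_one _ hf]
  · rw [conjTranspose_submatrix_mul_mul_submatrix, h.2, submatrix_diagonal _ _ hf]
    rfl

theorem mul [Fintype κ] [DecidableEq κ] {P : Matrix m κ 𝕜} {W : Matrix κ ι 𝕜}
    (h : DiagonalizesPencil (Pᴴ * Q * P) (Pᴴ * A * P) W μ) :
    DiagonalizesPencil Q A (P * W) μ := by
  simpa only [DiagonalizesPencil, conjTranspose_mul, Matrix.mul_assoc] using h

theorem of_submatrix [DecidableEq m] [Fintype κ] [DecidableEq κ] {f : κ → m} {W : Matrix κ ι 𝕜}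
    (h : DiagonalizesPencil (Q.submatrix f f) (A.submatrix f f) W μ) :
    DiagonalizesPencil Q A ((1 : Matrix m m 𝕜).submatrix id f * W) μ := by
  refine mul ?_
  simpa only [conjTranspose_submatrix_mul_mul_submatrix, conjTranspose_one, Matrix.one_mul,
    Matrix.mul_one] using h

theorem star_mulVec_dotProduct_mulVec [Fintype ι] (h : DiagonalizesPencil Q A V μ) (g : ι → 𝕜) :
    star (V *ᵥ g) ⬝ᵥ Q *ᵥ (V *ᵥ g) = ((∑ i, ‖g i‖ ^ 2 : ℝ) : 𝕜) ∧
      star (V *ᵥ g) ⬝ᵥ A *ᵥ (V *ᵥ g) = ((∑ i, ‖g i‖ ^ 2 * μ i : ℝ) : 𝕜) := by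
  refine ⟨?_, star_mulVec_dotProduct_mulVec_of_diagonal h.2 g⟩
  have hQ : Vᴴ * Q * V = diagonal fun _ => ((1 : ℝ) : 𝕜) := by
    rw [h.1, RCLike.ofReal_one, diagonal_one]
  simpa using star_mulVec_dotProduct_mulVec_of_diagonal hQ g

theorem le_of_card_lt [Fintype ι] [Fintype κ] [DecidableEq κ] {W : Matrix m κ 𝕜} {ν : κ → ℝ}
    (hV : DiagonalizesPencil Q A V μ) (hW : DiagonalizesPencil Q A W ν) {c d : ℝ}
    (hμ : ∀ i, μ i ≤ c) (hν : ∀ j, d ≤ ν j)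
    (hcard : Fintype.card m < Fintype.card ι + Fintype.card κ) : d ≤ c := by
  obtain ⟨g, e, hge, hx⟩ := exists_mulVec_eq_mulVec_of_card_lt V W hcard
  obtain ⟨hgQ, hgA⟩ := hV.star_mulVec_dotProduct_mulVec g
  obtain ⟨heQ, heA⟩ := hW.star_mulVec_dotProduct_mulVec e
  rw [hx] at hgQ hgA
  have hnorm : ∑ i, ‖g i‖ ^ 2 = ∑ j, ‖e j‖ ^ 2 := by exact_mod_cast hgQ.symm.trans heQ
  have hval : ∑ i, ‖g i‖ ^ 2 * μ i = ∑ j, ‖e j‖ ^ 2 * ν j := by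
    exact_mod_cast hgA.symm.trans heA
  have hpos : 0 < ∑ i, ‖g i‖ ^ 2 := by
    rcases hge with hg | he
    · exact sum_norm_sq_pos hg
    · exact hnorm ▸ sum_norm_sq_pos he
  refine le_of_mul_le_mul_left ?_ hpos
  calc (∑ i, ‖g i‖ ^ 2) * d = ∑ j, ‖e j‖ ^ 2 * d := by rw [hnorm, Finset.sum_mul]
    _ ≤ ∑ j, ‖e j‖ ^ 2 * ν j := by gcongr with j; exact hν j
    _ = ∑ i, ‖g i‖ ^ 2 * μ i := hval.symm
    _ ≤ ∑ i, ‖g i‖ ^ 2 * c := by gcongr with i; exact hμ i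
    _ = (∑ i, ‖g i‖ ^ 2) * c := by rw [Finset.sum_mul]

end DiagonalizesPencil

theorem DiagonalizesPencil.charpoly_inv_mul [DecidableEq m] {Q A V : Matrix m m 𝕜} {μ : m → ℝ}
    (h : DiagonalizesPencil Q A V μ) : (Q⁻¹ * A).charpoly = ∏ i, (X - C (μ i : 𝕜)) := by
  have hinv : Q⁻¹ = V * Vᴴ := inv_eq_left_inv <| by
    rw [Matrix.mul_assoc, mul_eq_one_comm, h.1]
  rw [hinv, Matrix.mul_assoc, charpoly_mul_comm, h.2, charpoly_diagonal]

theorem DiagonalizesPencil.roots_charpoly_inv_mul [DecidableEq m] {Q A V : Matrix m m 𝕜}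
    {μ : m → ℝ} (h : DiagonalizesPencil Q A V μ) :
    (Q⁻¹ * A).charpoly.roots = Multiset.map (fun i => (μ i : 𝕜)) Finset.univ.val := by
  rw [h.charpoly_inv_mul, roots_prod _ _ (Finset.prod_ne_zero_iff.mpr fun i _ => X_sub_C_ne_zero _)]
  simp

theorem IsHermitian.diagonalizesPencil_eigenvectorUnitary [DecidableEq m] {A : Matrix m m 𝕜}
    (hA : A.IsHermitian) :
    DiagonalizesPencil 1 A (hA.eigenvectorUnitary : Matrix m m 𝕜) hA.eigenvalues := by
  refine ⟨?_, ?_⟩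
  · simp [← star_eq_conjTranspose]
  · exact (Unitary.conjStarAlgAut_star_apply _ A).symm.trans
      hA.conjStarAlgAut_star_eigenvectorUnitary

theorem PosDef.exists_conjTranspose_mul_mul_eq_one [DecidableEq m] {Q : Matrix m m 𝕜}
    (hQ : Q.PosDef) : ∃ P : Matrix m m 𝕜, Pᴴ * Q * P = 1 := by
  open scoped MatrixOrder in
  obtain ⟨R, hR, hRR⟩ : ∃ R : Matrix m m 𝕜, R.IsHermitian ∧ R * R = Q :=
    ⟨CFC.sqrt Q, (CFC.sqrt_nonneg Q).posSemidef.1, CFC.sqrt_mul_sqrt_self Q hQ.posSemidef.nonneg⟩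
  have hdet : IsUnit R.det := by
    have := hQ.det_pos.ne'
    rw [← hRR, det_mul] at this
    exact isUnit_iff_ne_zero.mpr (left_ne_zero_of_mul this)
  refine ⟨R⁻¹, ?_⟩
  rw [conjTranspose_nonsing_inv, hR.eq, ← hRR, ← Matrix.mul_assoc, nonsing_inv_mul _ hdet,
    Matrix.one_mul, mul_nonsing_inv _ hdet]

theorem exists_diagonalizesPencil [DecidableEq m] {Q A : Matrix m m 𝕜} (hQ : Q.PosDef)
    (hA : A.IsHermitian) : ∃ (V : Matrix m m 𝕜) (μ : m → ℝ), DiagonalizesPencil Q A V μ := by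
  obtain ⟨P, hP⟩ := hQ.exists_conjTranspose_mul_mul_eq_one
  have hM : (Pᴴ * A * P).IsHermitian := isHermitian_conjTranspose_mul_mul P hA
  exact ⟨_, _, DiagonalizesPencil.mul (hP ▸ hM.diagonalizesPencil_eigenvectorUnitary)⟩

theorem exists_diagonalizesPencil_antitone {N : ℕ} {Q A : Matrix (Fin N) (Fin N) 𝕜}
    (hQ : Q.PosDef) (hA : A.IsHermitian) :
    ∃ (V : Matrix (Fin N) (Fin N) 𝕜) (μ : Fin N → ℝ), Antitone μ ∧ DiagonalizesPencil Q A V μ := by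
  obtain ⟨V, μ, h⟩ := exists_diagonalizesPencil hQ hA
  let σ := Tuple.sort (-μ)
  refine ⟨V.submatrix id σ, μ ∘ σ, fun i j hij => ?_, h.submatrix σ.injective⟩
  simpa using Tuple.monotone_sort (-μ) hij

theorem DiagonalizesPencil.interlace {n : ℕ} {Q A V : Matrix (Fin (n + 1)) (Fin (n + 1)) 𝕜}
    {W : Matrix (Fin (n + 1)) (Fin n) 𝕜} {μ : Fin (n + 1) → ℝ} {ν : Fin n → ℝ}
    (hV : DiagonalizesPencil Q A V μ) (hW : DiagonalizesPencil Q A W ν) (hμ : Antitone μ)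
    (hν : Antitone ν) (j : Fin n) : μ j.succ ≤ ν j ∧ ν j ≤ μ j.castSucc := by
  constructor
  · refine (hW.submatrix (f := ((↑) : Set.Ici j → Fin n)) Subtype.val_injective).le_of_card_lt
      (hV.submatrix (f := ((↑) : Set.Iic j.succ → Fin (n + 1))) Subtype.val_injective)
      (fun i => hν i.2) (fun i => hμ i.2) ?_
    simp only [Fintype.card_Ici, Fintype.card_Iic, Fin.card_Ici, Fin.card_Iic, Fintype.card_fin,
      Fin.val_succ]
    omega
  · refine (hV.submatrix (f := ((↑) : Set.Ici j.castSucc → Fin (n + 1)))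
      Subtype.val_injective).le_of_card_lt
      (hW.submatrix (f := ((↑) : Set.Iic j → Fin n)) Subtype.val_injective)
      (fun i => hμ i.2) (fun i => hν i.2) ?_
    simp only [Fintype.card_Ici, Fintype.card_Iic, Fin.card_Ici, Fin.card_Iic, Fintype.card_fin,
      Fin.val_castSucc]
    omega

end Matrix

theorem eq_of_antitone_of_map_eq {α β : Type*} [PartialOrder α] {f : α → β}
    (hf : Function.Injective f) {N : ℕ} {a b : Fin N → α} (ha : Antitone a) (hb : Antitone b)
    (h : Finset.univ.val.map (f ∘ a) = Finset.univ.val.map (f ∘ b)) : a = b := by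
  rw [← Multiset.map_map, ← Multiset.map_map] at h
  have hperm : (List.ofFn a).Perm (List.ofFn b) := by
    rw [← Multiset.coe_eq_coe]
    simpa [Fin.univ_val_map] using Multiset.map_injective hf h
  exact List.ofFn_injective <| hperm.eq_of_sortedGE ha.sortedGE_ofFn hb.sortedGE_ofFn

/-- If `Q` is Hermitian positive definite and `A` is Hermitian, then the eigenvalues of
`Q⁻¹A` and of the principal submatrices `Q′⁻¹A′` (deleting the `k`-th row and column)
are all real, and when listed in decreasing order with multiplicity they interlace. -/
theorem stmt1 (n : ℕ) (Q A : Matrix (Fin (n + 1)) (Fin (n + 1)) ℂ)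
    (hQ : Q.PosDef) (hA : A.IsHermitian) (k : Fin (n + 1)) :
    (∀ z ∈ ((Q⁻¹ * A).charpoly).roots, z.im = 0) ∧
    (∀ z ∈ (((Q.submatrix k.succAbove k.succAbove)⁻¹
        * (A.submatrix k.succAbove k.succAbove)).charpoly).roots, z.im = 0) ∧
    (∀ (a : Fin (n + 1) → ℝ) (b : Fin n → ℝ), Antitone a → Antitone b →
      ((Q⁻¹ * A).charpoly).roots = Multiset.map (fun i => (a i : ℂ)) Finset.univ.val →
      (((Q.submatrix k.succAbove k.succAbove)⁻¹
        * (A.submatrix k.succAbove k.succAbove)).charpoly).roots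
          = Multiset.map (fun i => (b i : ℂ)) Finset.univ.val →
      ∀ j : Fin n, a j.succ ≤ b j ∧ b j ≤ a j.castSucc) := by
  obtain ⟨V, μ, hμ, hV⟩ := exists_diagonalizesPencil_antitone hQ hA
  obtain ⟨W, ν, hν, hW⟩ := exists_diagonalizesPencil_antitone
    (hQ.submatrix Fin.succAbove_right_injective) (hA.submatrix k.succAbove)
  rw [hV.roots_charpoly_inv_mul, hW.roots_charpoly_inv_mul]
  refine ⟨by simp, by simp, fun a b ha hb hra hrb => ?_⟩
  obtain rfl := eq_of_antitone_of_map_eq Complex.ofReal_injective ha hμ hra.symm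
  obtain rfl := eq_of_antitone_of_map_eq Complex.ofReal_injective hb hν hrb.symm
  exact hV.interlace hW.of_submatrix ha hb
end

section
/- Let Q be an N×N complex Hermitian positive definite matrix and A an N×N complex Hermitian matrix, and let δ be the number of strictly positive eigenvalues of Q⁻¹A (counted with multiplicity). Then for every index set T of cardinality m > N − δ, the matrix Q_T⁻¹A_T, where Q_T and A_T are the m×m principal submatrices of Q and A on the index set T, has at least one strictly positive eigenvalue; in particular A_T ≠ 0. -/
/-!
Write `S = Q^{-1/2}` and diagonalise the Hermitian matrix `S A S = U diag(μ) Uᴴ`. Then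
`C = S U` is invertible with `Cᴴ A C = diag(μ)`, and `Q⁻¹A = S (S A)` has the characteristic
polynomial of `S A S`, so its roots are the real numbers `μᵢ`. Hence `xᴴ A x > 0` on the
`δ`-dimensional space `C · span {eᵢ | μᵢ > 0}`. Vectors supported on `T` form an
`m`-dimensional space, and `δ + m > N` yields a nonzero `x` in both, so `x_Tᴴ A_T x_T = xᴴ A x > 0`.
Applied to the pair `(Q_T, A_T)`, the diagonal form shows that a positive value of the
quadratic form of `A_T` forces some `μᵢ > 0`, a positive eigenvalue of `Q_T⁻¹ A_T`.
-/

open Matrix Polynomial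
open scoped ComplexOrder

namespace Matrix

lemma star_mulVec_dotProduct_mulVec_mulVec {R m n : Type*} [Fintype m] [Fintype n]
    [CommSemiring R] [StarRing R] (A : Matrix m m R) (M : Matrix m n R) (x : n → R) :
    star (M *ᵥ x) ⬝ᵥ (A *ᵥ (M *ᵥ x)) = star x ⬝ᵥ ((Mᴴ * A * M) *ᵥ x) := by
  rw [star_mulVec, ← dotProduct_mulVec, ← mulVec_mulVec, ← mulVec_mulVec]

lemma star_dotProduct_mulVec_submatrix {R m n : Type*} [Fintype m] [Fintype n]
    [NonUnitalSemiring R] [StarRing R] {g : m → n} (hg : Function.Injective g)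
    (M : Matrix n n R) {x : n → R} (hx : ∀ j ∉ Set.range g, x j = 0) :
    star x ⬝ᵥ (M *ᵥ x) = star (x ∘ g) ⬝ᵥ (M.submatrix g g *ᵥ (x ∘ g)) := by
  have hMx (i : m) : (M *ᵥ x) (g i) = (M.submatrix g g *ᵥ (x ∘ g)) i :=
    (Fintype.sum_of_injective g hg _ _ (fun j hj => by simp [hx j hj]) fun _ => rfl).symm
  exact (Fintype.sum_of_injective g hg _ _ (fun j hj => by simp [hx j hj])
    fun i => by simp [hMx]).symm

variable {𝕜 n : Type*} [RCLike 𝕜] [Fintype n] [DecidableEq n]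

lemma re_star_dotProduct_diagonal_mulVec (μ : n → ℝ) (x : n → 𝕜) :
    RCLike.re (star x ⬝ᵥ (diagonal (RCLike.ofReal ∘ μ) *ᵥ x)) = ∑ i, μ i * ‖x i‖ ^ 2 := by
  simp only [dotProduct, mulVec_diagonal, map_sum]
  refine Finset.sum_congr rfl fun i _ => ?_
  simp [mul_left_comm _ (μ i : 𝕜), RCLike.conj_mul]

section ConjEqDiagonal

variable {A C : Matrix n n 𝕜} {μ : n → ℝ}

lemma re_star_dotProduct_mulVec_of_conj_eq_diagonal
    (hdiag : Cᴴ * A * C = diagonal (RCLike.ofReal ∘ μ)) (w : n → 𝕜) :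
    RCLike.re (star (C *ᵥ w) ⬝ᵥ (A *ᵥ (C *ᵥ w))) = ∑ i, μ i * ‖w i‖ ^ 2 := by
  rw [star_mulVec_dotProduct_mulVec_mulVec, hdiag, re_star_dotProduct_diagonal_mulVec]

lemma exists_pos_of_conj_eq_diagonal (hC : IsUnit C)
    (hdiag : Cᴴ * A * C = diagonal (RCLike.ofReal ∘ μ)) {x : n → 𝕜}
    (hx : 0 < RCLike.re (star x ⬝ᵥ (A *ᵥ x))) : ∃ i, 0 < μ i := by
  obtain ⟨w, rfl⟩ := mulVec_surjective_iff_isUnit.mpr hC x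
  rw [re_star_dotProduct_mulVec_of_conj_eq_diagonal hdiag] at hx
  by_contra! h
  exact hx.not_ge <| Finset.sum_nonpos fun i _ =>
    mul_nonpos_of_nonpos_of_nonneg (h i) (by positivity)

lemma exists_submodule_finrank_eq_ncard_of_conj_eq_diagonal (hC : IsUnit C)
    (hdiag : Cᴴ * A * C = diagonal (RCLike.ofReal ∘ μ)) :
    ∃ V : Submodule 𝕜 (n → 𝕜), Module.finrank 𝕜 V = {i | 0 < μ i}.ncard ∧
      ∀ x ∈ V, x ≠ 0 → 0 < RCLike.re (star x ⬝ᵥ (A *ᵥ x)) := by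
  have hCinj : Function.Injective C.mulVecLin := mulVec_injective_iff_isUnit.mpr hC
  refine ⟨(Pi.spanSubset 𝕜 {i | 0 < μ i}).map C.mulVecLin, ?_, ?_⟩
  · rw [← (Submodule.equivMapOfInjective _ hCinj _).finrank_eq, Pi.dim_spanSubset]
  rintro _ ⟨w, hw, rfl⟩ hx
  rw [SetLike.mem_coe, Pi.mem_spanSubset_iff] at hw
  rw [mulVecLin_apply, re_star_dotProduct_mulVec_of_conj_eq_diagonal hdiag]
  obtain ⟨j, hj⟩ := Function.ne_iff.mp (fun h : w = 0 => hx (by simp [h]))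
  have hμj : 0 < μ j := by_contra fun h => hj (hw j h)
  refine Finset.sum_pos' (fun i _ => ?_) ⟨j, Finset.mem_univ j, by positivity⟩
  by_cases hi : 0 < μ i
  · positivity
  · simp [hw i hi]

end ConjEqDiagonal

namespace PosDef

variable {Q A : Matrix n n 𝕜}

open scoped MatrixOrder in
lemma exists_conjTranspose_mul_mul_eq_diagonal (hQ : Q.PosDef) (hA : A.IsHermitian) :
    ∃ (C : Matrix n n 𝕜) (μ : n → ℝ), IsUnit C ∧ Cᴴ * A * C = diagonal (RCLike.ofReal ∘ μ) ∧
      (Q⁻¹ * A).charpoly.roots = Finset.univ.val.map (RCLike.ofReal ∘ μ) := by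
  set S := CFC.sqrt Q⁻¹
  have hSS : S * S = Q⁻¹ := CFC.sqrt_mul_sqrt_self _ hQ.inv.posSemidef.nonneg
  have hS : Sᴴ = S := (CFC.sqrt_nonneg Q⁻¹).posSemidef.isHermitian
  have hB : (S * A * S).IsHermitian := by
    rw [IsHermitian, conjTranspose_mul, conjTranspose_mul, hS, hA.eq, Matrix.mul_assoc]
  refine ⟨S * hB.eigenvectorUnitary, hB.eigenvalues, ?_, ?_, ?_⟩
  · exact (isUnit_of_mul_isUnit_left (hSS ▸ hQ.inv.isUnit)).mul
      (Unitary.toUnits hB.eigenvectorUnitary).isUnit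
  · rw [conjTranspose_mul, hS, ← hB.conjStarAlgAut_star_eigenvectorUnitary,
      Unitary.conjStarAlgAut_star_apply]
    simp only [star_eq_conjTranspose, Matrix.mul_assoc]
  · rw [← hSS, Matrix.mul_assoc, charpoly_mul_comm, hB.roots_charpoly_eq_eigenvalues]

lemma exists_pos_root_charpoly_inv_mul (hQ : Q.PosDef) (hA : A.IsHermitian) {x : n → 𝕜}
    (hx : 0 < RCLike.re (star x ⬝ᵥ (A *ᵥ x))) :
    ∃ z ∈ (Q⁻¹ * A).charpoly.roots, 0 < RCLike.re z ∧ RCLike.im z = 0 := by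
  obtain ⟨C, μ, hC, hdiag, hroots⟩ := hQ.exists_conjTranspose_mul_mul_eq_diagonal hA
  obtain ⟨i, hi⟩ := exists_pos_of_conj_eq_diagonal hC hdiag hx
  exact ⟨μ i, hroots ▸ Multiset.mem_map_of_mem _ (Finset.mem_univ_val i), by simpa, by simp⟩

lemma exists_submodule_finrank_eq_card_roots_charpoly_inv_mul (hQ : Q.PosDef)
    (hA : A.IsHermitian) :
    ∃ V : Submodule 𝕜 (n → 𝕜),
      Module.finrank 𝕜 V = ((Q⁻¹ * A).charpoly.roots.filter (0 < RCLike.re ·)).card ∧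
      ∀ x ∈ V, x ≠ 0 → 0 < RCLike.re (star x ⬝ᵥ (A *ᵥ x)) := by
  obtain ⟨C, μ, hC, hdiag, hroots⟩ := hQ.exists_conjTranspose_mul_mul_eq_diagonal hA
  have hcard :
      ((Q⁻¹ * A).charpoly.roots.filter (0 < RCLike.re ·)).card = {i | 0 < μ i}.ncard := by
    rw [hroots, Multiset.filter_map, Multiset.card_map, Set.ncard_eq_toFinset_card',
      Set.toFinset_ofPred, Finset.card_def, Finset.filter_val]
    simp
  exact hcard ▸ exists_submodule_finrank_eq_ncard_of_conj_eq_diagonal hC hdiag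

end PosDef

end Matrix

/-- Let `δ` be the number of strictly positive eigenvalues of `Q⁻¹A` (with multiplicity),
where `Q` is Hermitian positive definite and `A` Hermitian. Then for every index set of
cardinality `m > N − δ` (enumerated by an injective `g : Fin m → Fin N`), the matrix
`Q_T⁻¹A_T` has at least one strictly positive (real) eigenvalue; in particular `A_T ≠ 0`. -/
theorem stmt3 (N : ℕ) (Q A : Matrix (Fin N) (Fin N) ℂ)
    (hQ : Q.PosDef) (hA : A.IsHermitian) (δ : ℕ)
    (hδ : δ = (((Q⁻¹ * A).charpoly).roots.filter (fun z => 0 < z.re)).card)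
    (m : ℕ) (hm : N - δ < m) (g : Fin m → Fin N) (hg : Function.Injective g) :
    (∃ z ∈ (((Q.submatrix g g)⁻¹ * (A.submatrix g g)).charpoly).roots,
      0 < z.re ∧ z.im = 0) ∧
    A.submatrix g g ≠ 0 := by
  obtain ⟨V, hV, hVpos⟩ := hQ.exists_submodule_finrank_eq_card_roots_charpoly_inv_mul hA
  simp only [RCLike.re_to_complex, ← hδ] at hV
  set W := Pi.spanSubset ℂ (Set.range g)
  have hW : Module.finrank ℂ W = m := by
    rw [Pi.dim_spanSubset, Set.ncard_range_of_injective hg, Nat.card_eq_fintype_card,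
      Fintype.card_fin]
  have hVW : ¬ Disjoint V W := fun h => by
    have := Submodule.finrank_add_finrank_le_of_disjoint h
    rw [Module.finrank_fin_fun, hW, hV] at this
    omega
  obtain ⟨x, hxV, hxW, hx⟩ : ∃ x ∈ V, x ∈ W ∧ x ≠ 0 := by
    simpa [Submodule.disjoint_def] using hVW
  have hpos : 0 < (star (x ∘ g) ⬝ᵥ (A.submatrix g g *ᵥ (x ∘ g))).re := by
    rw [← star_dotProduct_mulVec_submatrix hg A (Pi.mem_spanSubset_iff.mp hxW)]
    exact hVpos x hxV hx
  refine ⟨(hQ.submatrix hg).exists_pos_root_charpoly_inv_mul (hA.submatrix g) hpos, fun h => ?_⟩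
  simp [h] at hpos
end

section
/- Let Z be a p×p complex Hermitian positive semidefinite matrix whose real part Q = Re Z is positive definite, and let U = Im Z. Then every eigenvalue of the matrix iQ⁻¹U lies in the closed interval [−1, 1]; in particular the largest eigenvalue R of iQ⁻¹U satisfies 0 ≤ R ≤ 1. -/
open Matrix Polynomial
open scoped ComplexOrder

/-!
If `i Q⁻¹ U v = z v` with `v ≠ 0`, then `i U v = z Q v`, so `v* (iU) v = z · v* Q v` with
`v* Q v > 0`. Since `Z = Q + iU` and `Zᵀ = conj Z = Q - iU` are both positive semidefinite,
`-v* Q v ≤ v* (iU) v ≤ v* Q v`, which forces `z` to be real with `-1 ≤ z ≤ 1`. The eigenvalues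
sum to `tr (i Q⁻¹ U) = 0` because `Q` is symmetric and `U` antisymmetric, so the largest one
is nonnegative.
-/

noncomputable def AImat (p : ℕ) (Z : Matrix (Fin p) (Fin p) ℂ) :
    Matrix (Fin p) (Fin p) ℂ :=
  Complex.I •
    (((Matrix.of fun a b => (Z a b).re : Matrix (Fin p) (Fin p) ℝ))⁻¹
      * (Matrix.of fun a b => (Z a b).im)).map Complex.ofReal

namespace Matrix

section

variable {n : Type*}

theorem map_re_add_I_smul_map_im (Z : Matrix n n ℂ) :
    (Z.map Complex.re).map (↑) + Complex.I • (Z.map Complex.im).map (↑) = Z := by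
  ext i j
  simpa [mul_comm] using Complex.re_add_im (Z i j)

theorem IsHermitian.map_re_sub_I_smul_map_im {Z : Matrix n n ℂ} (hZ : Z.IsHermitian) :
    (Z.map Complex.re).map (↑) - Complex.I • (Z.map Complex.im).map (↑) = Zᵀ := by
  ext i j
  rw [transpose_apply, ← hZ.apply j i]
  apply Complex.ext <;> simp

theorem IsHermitian.isSymm_map_re {Z : Matrix n n ℂ} (hZ : Z.IsHermitian) :
    (Z.map Complex.re).IsSymm := by
  ext i j
  simp [← hZ.apply i j]

theorem IsHermitian.transpose_map_im {Z : Matrix n n ℂ} (hZ : Z.IsHermitian) :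
    (Z.map Complex.im)ᵀ = -Z.map Complex.im := by
  ext i j
  simp [← hZ.apply i j]

end

variable {n : Type*} [Fintype n]

theorem exists_mulVec_eq_smul_of_mem_roots_charpoly [DecidableEq n] {K : Type*} [Field K]
    {A : Matrix n n K} {z : K} (hz : z ∈ A.charpoly.roots) : ∃ v ≠ 0, A *ᵥ v = z • v := by
  have hz' : Module.End.HasEigenvalue (toLin' A) z := by
    rw [Module.End.hasEigenvalue_iff_mem_spectrum, spectrum_toLin',
      mem_spectrum_iff_isRoot_charpoly]
    exact isRoot_of_mem_roots hz
  obtain ⟨v, hv⟩ := hz'.exists_hasEigenvector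
  exact ⟨v, hv.2, by simpa using hv.apply_eq_smul⟩

theorem trace_inv_mul_eq_zero [DecidableEq n] {K : Type*} [Field K] [CharZero K]
    {Q U : Matrix n n K} (hQ : Q.IsSymm) (hU : Uᵀ = -U) : (Q⁻¹ * U).trace = 0 := by
  rw [← self_eq_neg]
  calc (Q⁻¹ * U).trace = (Q⁻¹ * U)ᵀ.trace := (trace_transpose _).symm
    _ = -(Q⁻¹ * U).trace := by
      rw [transpose_mul, transpose_nonsing_inv, hQ.eq, hU, neg_mul, trace_neg, trace_mul_comm]

theorem PosDef.map_ofReal {Q : Matrix n n ℝ} (hQ : Q.PosDef) :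
    (Q.map ((↑) : ℝ → ℂ)).PosDef := by
  have hQc : (Q.map ((↑) : ℝ → ℂ)).IsHermitian :=
    hQ.1.map _ fun r => (Complex.conj_ofReal r).symm
  refine .of_dotProduct_mulVec_pos hQc fun v hv => ?_
  set x : n → ℝ := fun i => (v i).re
  set y : n → ℝ := fun i => (v i).im
  have hform : star v ⬝ᵥ (Q.map ((↑) : ℝ → ℂ) *ᵥ v) = ↑(x ⬝ᵥ (Q *ᵥ x) + y ⬝ᵥ (Q *ᵥ y)) := by
    apply Complex.ext
    · simp [x, y, dotProduct, mulVec, Finset.mul_sum, Complex.re_sum, ← Finset.sum_add_distrib]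
    · simpa using hQc.im_star_dotProduct_mulVec_self v
  have hx := hQ.posSemidef.dotProduct_mulVec_nonneg x
  have hy := hQ.posSemidef.dotProduct_mulVec_nonneg y
  simp only [star_trivial] at hx hy
  rw [hform, Complex.zero_lt_real]
  by_cases hx0 : x = 0
  · have hy0 : y ≠ 0 := fun hy0 =>
      hv (funext fun i => Complex.ext (congrFun hx0 i) (congrFun hy0 i))
    simpa [hx0] using hQ.dotProduct_mulVec_pos hy0
  · exact add_pos_of_pos_of_nonneg (by simpa using hQ.dotProduct_mulVec_pos hx0) hy

theorem mem_Icc_of_mulVec_eq_smul_mulVec {A B : Matrix n n ℂ} (hA : A.PosDef)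
    (hAB : (A + B).PosSemidef) (hBA : (A - B).PosSemidef) {v : n → ℂ} (hv : v ≠ 0) {z : ℂ}
    (h : B *ᵥ v = z • A *ᵥ v) : z ∈ Set.Icc (-1) 1 := by
  obtain ⟨r, hr, hvAv⟩ : ∃ r : ℝ, 0 < r ∧ star v ⬝ᵥ (A *ᵥ v) = r := by
    obtain ⟨hre, him⟩ := Complex.pos_iff.1 (hA.dotProduct_mulVec_pos hv)
    exact ⟨_, hre, Complex.ext rfl him.symm⟩
  have hvBv : star v ⬝ᵥ (B *ᵥ v) = z * r := by rw [h, dotProduct_smul, hvAv, smul_eq_mul]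
  have hplus := hAB.dotProduct_mulVec_nonneg v
  have hminus := hBA.dotProduct_mulVec_nonneg v
  rw [add_mulVec, dotProduct_add, hvAv, hvBv] at hplus
  rw [sub_mulVec, dotProduct_sub, hvAv, hvBv] at hminus
  simp only [Complex.le_def, Set.mem_Icc, Complex.add_re, Complex.add_im, Complex.sub_re,
    Complex.sub_im, Complex.mul_re, Complex.mul_im, Complex.ofReal_re, Complex.ofReal_im,
    Complex.zero_re, Complex.zero_im, Complex.neg_re, Complex.neg_im, Complex.one_re,
    Complex.one_im] at hplus hminus ⊢
  have hz : z.im = 0 := (mul_eq_zero.1 (by linarith [hplus.2])).resolve_right hr.ne'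
  exact ⟨⟨by nlinarith [hplus.1], by simp [hz]⟩, by nlinarith [hminus.1], hz⟩

end Matrix

theorem Multiset.nonneg_of_sum_eq_zero_of_forall_le {K : Type*} [Field K] [LinearOrder K]
    [IsStrictOrderedRing K] {s : Multiset K} (hs : s.sum = 0) {x R : K} (hx : x ∈ s)
    (hR : ∀ y ∈ s, y ≤ R) : 0 ≤ R := by
  have h := s.sum_le_card_nsmul R hR
  rw [hs, nsmul_eq_mul] at h
  have hcard : (0 : K) < s.card := by exact_mod_cast Multiset.card_pos_iff_exists_mem.2 ⟨x, hx⟩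
  nlinarith

theorem mem_Icc_of_mem_roots_charpoly_AImat {p : ℕ} {Z : Matrix (Fin p) (Fin p) ℂ}
    (hZ : Z.PosSemidef) (hQ : (Z.map Complex.re).PosDef) {z : ℂ}
    (hz : z ∈ (AImat p Z).charpoly.roots) : z ∈ Set.Icc (-1) 1 := by
  set Q := Z.map Complex.re
  set U := Z.map Complex.im
  obtain ⟨v, hv, hAv⟩ := exists_mulVec_eq_smul_of_mem_roots_charpoly hz
  have hA : AImat p Z = Complex.I • (Q⁻¹ * U).map (↑) := rfl
  have hQU : Q.map (↑) * (Q⁻¹ * U).map (↑) = U.map ((↑) : ℝ → ℂ) :=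
    (Matrix.map_mul (f := Complex.ofRealHom)).symm.trans <| congrArg (map · _) <|
      mul_nonsing_inv_cancel_left Q U ((isUnit_iff_isUnit_det Q).1 hQ.isUnit)
  refine mem_Icc_of_mulVec_eq_smul_mulVec hQ.map_ofReal
    ((map_re_add_I_smul_map_im Z).symm ▸ hZ) (hZ.1.map_re_sub_I_smul_map_im ▸ hZ.transpose) hv ?_
  calc (Complex.I • U.map (↑)) *ᵥ v = Q.map (↑) *ᵥ (AImat p Z *ᵥ v) := by
        rw [hA, mulVec_mulVec, mul_smul_comm, hQU]
    _ = z • Q.map (↑) *ᵥ v := by rw [hAv, mulVec_smul]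

theorem trace_AImat_eq_zero {p : ℕ} {Z : Matrix (Fin p) (Fin p) ℂ} (hZ : Z.IsHermitian) :
    (AImat p Z).trace = 0 := by
  have hA : AImat p Z = Complex.I • ((Z.map Complex.re)⁻¹ * Z.map Complex.im).map (↑) := rfl
  have hmap (M : Matrix (Fin p) (Fin p) ℝ) : (M.map ((↑) : ℝ → ℂ)).trace = M.trace :=
    (AddMonoidHom.map_trace Complex.ofRealHom _).symm
  rw [hA, trace_smul, hmap, trace_inv_mul_eq_zero hZ.isSymm_map_re hZ.transpose_map_im]
  simp

/-- For `Z` Hermitian positive semidefinite with positive definite real part `Q = Re Z`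
and `U = Im Z`, every eigenvalue of `iQ⁻¹U` is real and lies in `[−1, 1]`; in particular
the largest eigenvalue `R` satisfies `0 ≤ R ≤ 1`. -/
theorem stmt7 (p : ℕ) (Z : Matrix (Fin p) (Fin p) ℂ) (hZ : Z.PosSemidef)
    (hQ : (Matrix.of fun a b => (Z a b).re : Matrix (Fin p) (Fin p) ℝ).PosDef) :
    (∀ z ∈ ((AImat p Z).charpoly).roots, z.im = 0 ∧ -1 ≤ z.re ∧ z.re ≤ 1) ∧
    (∀ R : ℝ, (R : ℂ) ∈ ((AImat p Z).charpoly).roots →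
      (∀ z ∈ ((AImat p Z).charpoly).roots, z.re ≤ R) → 0 ≤ R ∧ R ≤ 1) := by
  have hIcc : ∀ z ∈ (AImat p Z).charpoly.roots, z.im = 0 ∧ -1 ≤ z.re ∧ z.re ≤ 1 := by
    intro z hz
    obtain ⟨hlo, hhi⟩ := mem_Icc_of_mem_roots_charpoly_AImat hZ hQ hz
    exact ⟨(Complex.le_def.1 hhi).2, (Complex.le_def.1 hlo).1, (Complex.le_def.1 hhi).1⟩
  refine ⟨hIcc, fun R hR hmax => ⟨?_, by simpa using (hIcc R hR).2.2⟩⟩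
  have hsum : ((AImat p Z).charpoly.roots.map Complex.re).sum = 0 := by
    have := map_multiset_sum Complex.reAddGroupHom (AImat p Z).charpoly.roots
    rw [← trace_eq_sum_roots_charpoly, trace_AImat_eq_zero hZ.1] at this
    simpa using this.symm
  exact Multiset.nonneg_of_sum_eq_zero_of_forall_le hsum (Multiset.mem_map_of_mem _ hR)
    (Multiset.forall_mem_map_iff.2 hmax)
end

section
/- For 0 < r < 1, θ ∈ (0, π) and φ ∈ ℝ, let ρ be the 2×2 complex matrix ρ = (1/2)(I + r sinθ cosφ σ₁ + r sinθ sinφ σ₂ + r cosθ σ₃), where σ₁, σ₂, σ₃ are the Pauli matrices, and for α ∈ {r, θ, φ} let L_α be the unique Hermitian matrix satisfying ∂_α ρ = (L_α ρ + ρ L_α)/2. Then the 3×3 matrix U with entries U_{αβ} = −(i/2) Tr[ρ [L_α, L_β]], in the ordering (r, θ, φ), has U_{θφ} = r³ sinθ = −U_{φθ} and all other entries equal to zero. -/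
open Matrix

/-- The Pauli matrix `σ₁`. -/
noncomputable def pauli1 : Matrix (Fin 2) (Fin 2) ℂ := !![0, 1; 1, 0]

/-- The Pauli matrix `σ₂`. -/
noncomputable def pauli2 : Matrix (Fin 2) (Fin 2) ℂ := !![0, -Complex.I; Complex.I, 0]

/-- The Pauli matrix `σ₃`. -/
noncomputable def pauli3 : Matrix (Fin 2) (Fin 2) ℂ := !![1, 0; 0, -1]

/-- The generic qubit state in Bloch coordinates:
`ρ = (1/2)(I + r sinθ cosφ σ₁ + r sinθ sinφ σ₂ + r cosθ σ₃)`. -/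
noncomputable def rhoBloch (r θ φ : ℝ) : Matrix (Fin 2) (Fin 2) ℂ :=
  (2 : ℂ)⁻¹ • ((1 : Matrix (Fin 2) (Fin 2) ℂ)
    + ((r * Real.sin θ * Real.cos φ : ℝ) : ℂ) • pauli1
    + ((r * Real.sin θ * Real.sin φ : ℝ) : ℂ) • pauli2
    + ((r * Real.cos θ : ℝ) : ℂ) • pauli3)

noncomputable def NM (θ φ : ℝ) : Matrix (Fin 2) (Fin 2) ℂ :=
  !![(Real.cos θ : ℂ),
     (Real.sin θ : ℂ) * (Real.cos φ : ℂ) - Complex.I * ((Real.sin θ : ℂ) * (Real.sin φ : ℂ));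
     (Real.sin θ : ℂ) * (Real.cos φ : ℂ) + Complex.I * ((Real.sin θ : ℂ) * (Real.sin φ : ℂ)),
     -(Real.cos θ : ℂ)]

noncomputable def UM (θ φ : ℝ) : Matrix (Fin 2) (Fin 2) ℂ :=
  !![-(Real.sin θ : ℂ),
     (Real.cos θ : ℂ) * (Real.cos φ : ℂ) - Complex.I * ((Real.cos θ : ℂ) * (Real.sin φ : ℂ));
     (Real.cos θ : ℂ) * (Real.cos φ : ℂ) + Complex.I * ((Real.cos θ : ℂ) * (Real.sin φ : ℂ)),
     (Real.sin θ : ℂ)]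

noncomputable def VM (θ φ : ℝ) : Matrix (Fin 2) (Fin 2) ℂ :=
  !![0,
     -((Real.sin θ : ℂ) * (Real.sin φ : ℂ)) - Complex.I * ((Real.sin θ : ℂ) * (Real.cos φ : ℂ));
     -((Real.sin θ : ℂ) * (Real.sin φ : ℂ)) + Complex.I * ((Real.sin θ : ℂ) * (Real.cos φ : ℂ)),
     0]

lemma rho_explicit (r θ φ : ℝ) :
    rhoBloch r θ φ = (2 : ℂ)⁻¹ • ((1 : Matrix (Fin 2) (Fin 2) ℂ) + (r : ℂ) • NM θ φ) := by
  ext i j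
  fin_cases i <;> fin_cases j <;>
    simp [rhoBloch, NM, pauli1, pauli2, pauli3, Matrix.one_apply] <;> push_cast <;> ring

lemma pyth1 (x : ℝ) : (Complex.sin x)^2 + (Complex.cos x)^2 = 1 :=
  Complex.sin_sq_add_cos_sq _

lemma rho2_eq (r θ φ : ℝ) :
    (1 : Matrix (Fin 2) (Fin 2) ℂ) + (r : ℂ) • NM θ φ
      = !![1 + (r:ℂ) * (Real.cos θ : ℂ),
           (r:ℂ) * ((Real.sin θ : ℂ) * (Real.cos φ : ℂ) - Complex.I * ((Real.sin θ : ℂ) * (Real.sin φ : ℂ)));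
           (r:ℂ) * ((Real.sin θ : ℂ) * (Real.cos φ : ℂ) + Complex.I * ((Real.sin θ : ℂ) * (Real.sin φ : ℂ))),
           1 - (r:ℂ) * (Real.cos θ : ℂ)] := by
  ext i j
  fin_cases i <;> fin_cases j <;> simp [NM, Matrix.one_apply] <;> ring

lemma key_r (r θ φ : ℝ) :
    (NM θ φ - (r : ℂ) • 1) * (1 + (r : ℂ) • NM θ φ)
      + (1 + (r : ℂ) • NM θ φ) * (NM θ φ - (r : ℂ) • 1)
      = (2 * (1 - (r : ℂ)^2)) • NM θ φ := by
  have hp1 := pyth1 θ; have hp2 := pyth1 φ; have hI := Complex.I_sq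
  ext i j
  fin_cases i <;> fin_cases j <;>
    (simp [rho2_eq, NM, Matrix.mul_apply, Fin.sum_univ_two, Matrix.one_apply]; push_cast)
  · linear_combination (2*(r:ℂ)*(Complex.sin θ)^2) * hp2 + (2*(r:ℂ)) * hp1
      + (-(2*(r:ℂ)*(Complex.sin θ)^2*(Complex.sin φ)^2)) * hI
  · ring
  · ring
  · linear_combination (2*(r:ℂ)*(Complex.sin θ)^2) * hp2 + (2*(r:ℂ)) * hp1
      + (-(2*(r:ℂ)*(Complex.sin θ)^2*(Complex.sin φ)^2)) * hI

lemma key_t (r θ φ : ℝ) :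
    UM θ φ * (1 + (r : ℂ) • NM θ φ) + (1 + (r : ℂ) • NM θ φ) * UM θ φ
      = (2 : ℂ) • UM θ φ := by
  have hp2 := pyth1 φ; have hI := Complex.I_sq
  simp only [rho2_eq]
  ext i j
  fin_cases i <;> fin_cases j <;>
    (simp [rho2_eq, NM, UM, Matrix.mul_apply, Fin.sum_univ_two, Matrix.one_apply]; push_cast)
  · linear_combination (2*(r:ℂ)*(Complex.sin θ)*(Complex.cos θ)) * hp2
      + (-(2*(r:ℂ)*(Complex.sin θ)*(Complex.cos θ)*(Complex.sin φ)^2)) * hI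
  · ring
  · ring
  · linear_combination (2*(r:ℂ)*(Complex.sin θ)*(Complex.cos θ)) * hp2
      + (-(2*(r:ℂ)*(Complex.sin θ)*(Complex.cos θ)*(Complex.sin φ)^2)) * hI

lemma key_p (r θ φ : ℝ) :
    VM θ φ * (1 + (r : ℂ) • NM θ φ) + (1 + (r : ℂ) • NM θ φ) * VM θ φ
      = (2 : ℂ) • VM θ φ := by
  have hI := Complex.I_sq
  simp only [rho2_eq]
  ext i j
  fin_cases i <;> fin_cases j <;>
    (simp [rho2_eq, NM, VM, Matrix.mul_apply, Fin.sum_univ_two, Matrix.one_apply]; push_cast)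
  · linear_combination (-(2*(r:ℂ)*(Complex.sin θ)^2*(Complex.cos φ)*(Complex.sin φ))) * hI
  · ring
  · ring
  · linear_combination (-(2*(r:ℂ)*(Complex.sin θ)^2*(Complex.cos φ)*(Complex.sin φ))) * hI

lemma lyap_inj (r θ φ : ℝ) (h1 : (1 : ℂ) + (r:ℂ) * Complex.cos θ ≠ 0)
    (h2 : (1:ℂ) - (r:ℂ)^2 ≠ 0) (D : Matrix (Fin 2) (Fin 2) ℂ)
    (hD : D * (1 + (r : ℂ) • NM θ φ) + (1 + (r : ℂ) • NM θ φ) * D = 0) : D = 0 := by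
  have hp1 := pyth1 θ; have hp2 := pyth1 φ; have hI := Complex.I_sq
  rw [rho2_eq] at hD
  have h00 := congr_fun (congr_fun hD 0) 0
  have h01 := congr_fun (congr_fun hD 0) 1
  have h10 := congr_fun (congr_fun hD 1) 0
  have h11 := congr_fun (congr_fun hD 1) 1
  simp [Matrix.add_apply, Matrix.mul_apply, Matrix.vecMul, dotProduct, Fin.sum_univ_two] at h00 h01 h10 h11
  push_cast at h00 h01 h10 h11
  set A := Complex.sin θ
  set B := Complex.cos θ
  set C := Complex.cos φ
  set E := Complex.sin φ
  set R := (r : ℂ)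
  have hT : ((1:ℂ) - R^2) * (D 0 0 + D 1 1) = 0 := by
    linear_combination ((1 - R*B)/2) * h00 + ((1+R*B)/2) * h11
      - (R*(A*C + Complex.I*(A*E))/2) * h01 - (R*(A*C - Complex.I*(A*E))/2) * h10
      + (R^2*(D 0 0 + D 1 1)) * hp1 + (R^2*A^2*(D 0 0 + D 1 1)) * hp2
      + (-(R^2*A^2*E^2*(D 0 0 + D 1 1))) * hI
  have hT2 : D 0 0 + D 1 1 = 0 := by
    rcases mul_eq_zero.mp hT with h | h
    · exact absurd h h2
    · exact h
  have hb : D 0 1 = 0 := by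
    linear_combination h01/2 - (R*(A*C - Complex.I*(A*E))/2) * hT2
  have hc : D 1 0 = 0 := by
    linear_combination h10/2 - (R*(A*C + Complex.I*(A*E))/2) * hT2
  have ha' : ((1:ℂ) + R*B) * D 0 0 = 0 := by
    linear_combination h00/2 - (R*(A*C + Complex.I*(A*E))/2) * hb
      - (R*(A*C - Complex.I*(A*E))/2) * hc
  have ha : D 0 0 = 0 := by
    rcases mul_eq_zero.mp ha' with h | h
    · exact absurd h h1
    · exact h
  have hd : D 1 1 = 0 := by linear_combination hT2 - ha
  ext i j
  fin_cases i <;> fin_cases j <;> simp [ha, hb, hc, hd]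

lemma deriv_r (r θ φ : ℝ) (i j : Fin 2) :
    HasDerivAt (fun t => rhoBloch t θ φ i j) (((2:ℂ)⁻¹ • NM θ φ) i j) r := by
  have hid : HasDerivAt (fun t : ℝ => (t:ℂ)) 1 r := by
    simpa using (hasDerivAt_id r).ofReal_comp
  have hfin : ∀ k : Fin 2, k = 0 ∨ k = 1 := by decide
  rcases hfin i with rfl | rfl <;> rcases hfin j with rfl | rfl
  · have heq : (fun t => rhoBloch t θ φ 0 0)
        = (fun t : ℝ => (2:ℂ)⁻¹ * (1 + ↑t * Complex.cos ↑θ)) := by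
      funext t; simp [rho_explicit, NM, Matrix.one_apply]
    rw [heq]
    have H := ((hid.mul_const (Complex.cos ↑θ)).const_add 1).const_mul ((2:ℂ)⁻¹)
    refine H.congr_deriv ?_
    simp [NM]; try ring
  · have heq : (fun t => rhoBloch t θ φ 0 1)
        = (fun t : ℝ => (2:ℂ)⁻¹ * (↑t * (Complex.sin ↑θ * Complex.cos ↑φ
            - Complex.I * (Complex.sin ↑θ * Complex.sin ↑φ)))) := by
      funext t; simp [rho_explicit, NM, Matrix.one_apply]
    rw [heq]
    have H := (hid.mul_const (Complex.sin ↑θ * Complex.cos ↑φ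
        - Complex.I * (Complex.sin ↑θ * Complex.sin ↑φ))).const_mul ((2:ℂ)⁻¹)
    refine H.congr_deriv ?_
    simp [NM]; try ring
  · have heq : (fun t => rhoBloch t θ φ 1 0)
        = (fun t : ℝ => (2:ℂ)⁻¹ * (↑t * (Complex.sin ↑θ * Complex.cos ↑φ
            + Complex.I * (Complex.sin ↑θ * Complex.sin ↑φ)))) := by
      funext t; simp [rho_explicit, NM, Matrix.one_apply]
    rw [heq]
    have H := (hid.mul_const (Complex.sin ↑θ * Complex.cos ↑φ
        + Complex.I * (Complex.sin ↑θ * Complex.sin ↑φ))).const_mul ((2:ℂ)⁻¹)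
    refine H.congr_deriv ?_
    simp [NM]; try ring
  · have heq : (fun t => rhoBloch t θ φ 1 1)
        = (fun t : ℝ => (2:ℂ)⁻¹ * (1 + ↑t * (-Complex.cos ↑θ))) := by
      funext t; simp [rho_explicit, NM, Matrix.one_apply]; try ring
    rw [heq]
    have H := ((hid.mul_const (-Complex.cos ↑θ)).const_add 1).const_mul ((2:ℂ)⁻¹)
    refine H.congr_deriv ?_
    simp [NM]; try ring

lemma deriv_t (r θ φ : ℝ) (i j : Fin 2) :
    HasDerivAt (fun t => rhoBloch r t φ i j) ((((2:ℂ)⁻¹ * r) • UM θ φ) i j) θ := by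
  have hsin : HasDerivAt (fun t : ℝ => Complex.sin ↑t) (Complex.cos ↑θ) θ :=
    (Complex.hasDerivAt_sin ↑θ).comp_ofReal
  have hcos : HasDerivAt (fun t : ℝ => Complex.cos ↑t) (-Complex.sin ↑θ) θ :=
    (Complex.hasDerivAt_cos ↑θ).comp_ofReal
  have hfin : ∀ k : Fin 2, k = 0 ∨ k = 1 := by decide
  rcases hfin i with rfl | rfl <;> rcases hfin j with rfl | rfl
  · have heq : (fun t => rhoBloch r t φ 0 0)
        = (fun t : ℝ => (2:ℂ)⁻¹ * (1 + ↑r * Complex.cos ↑t)) := by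
      funext t; simp [rho_explicit, NM, Matrix.one_apply]
    rw [heq]
    have H := ((hcos.const_mul ((r:ℂ))).const_add 1).const_mul ((2:ℂ)⁻¹)
    refine H.congr_deriv ?_
    simp [UM]; try ring
  · have heq : (fun t => rhoBloch r t φ 0 1)
        = (fun t : ℝ => (2:ℂ)⁻¹ * (↑r * (Complex.sin ↑t * Complex.cos ↑φ
            - Complex.I * (Complex.sin ↑t * Complex.sin ↑φ)))) := by
      funext t; simp [rho_explicit, NM, Matrix.one_apply]
    rw [heq]
    have H := ((((hsin.mul_const (Complex.cos ↑φ)).sub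
        ((hsin.mul_const (Complex.sin ↑φ)).const_mul Complex.I)).const_mul
        ((r:ℂ))).const_mul ((2:ℂ)⁻¹))
    refine H.congr_deriv ?_
    simp [UM]; try ring
  · have heq : (fun t => rhoBloch r t φ 1 0)
        = (fun t : ℝ => (2:ℂ)⁻¹ * (↑r * (Complex.sin ↑t * Complex.cos ↑φ
            + Complex.I * (Complex.sin ↑t * Complex.sin ↑φ)))) := by
      funext t; simp [rho_explicit, NM, Matrix.one_apply]
    rw [heq]
    have H := ((((hsin.mul_const (Complex.cos ↑φ)).add
        ((hsin.mul_const (Complex.sin ↑φ)).const_mul Complex.I)).const_mul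
        ((r:ℂ))).const_mul ((2:ℂ)⁻¹))
    refine H.congr_deriv ?_
    simp [UM]; try ring
  · have heq : (fun t => rhoBloch r t φ 1 1)
        = (fun t : ℝ => (2:ℂ)⁻¹ * (1 + ↑r * -Complex.cos ↑t)) := by
      funext t; simp [rho_explicit, NM, Matrix.one_apply]; try ring
    rw [heq]
    have H := ((hcos.neg.const_mul ((r:ℂ))).const_add 1).const_mul ((2:ℂ)⁻¹)
    refine H.congr_deriv ?_
    simp [UM]; try ring

lemma deriv_p (r θ φ : ℝ) (i j : Fin 2) :
    HasDerivAt (fun t => rhoBloch r θ t i j) ((((2:ℂ)⁻¹ * r) • VM θ φ) i j) φ := by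
  have hsin : HasDerivAt (fun t : ℝ => Complex.sin ↑t) (Complex.cos ↑φ) φ :=
    (Complex.hasDerivAt_sin ↑φ).comp_ofReal
  have hcos : HasDerivAt (fun t : ℝ => Complex.cos ↑t) (-Complex.sin ↑φ) φ :=
    (Complex.hasDerivAt_cos ↑φ).comp_ofReal
  have hfin : ∀ k : Fin 2, k = 0 ∨ k = 1 := by decide
  rcases hfin i with rfl | rfl <;> rcases hfin j with rfl | rfl
  · have heq : (fun t => rhoBloch r θ t 0 0)
        = (fun _ : ℝ => (2:ℂ)⁻¹ * (1 + ↑r * Complex.cos ↑θ)) := by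
      funext t; simp [rho_explicit, NM, Matrix.one_apply]
    rw [heq]
    have H := hasDerivAt_const φ ((2:ℂ)⁻¹ * (1 + ↑r * Complex.cos ↑θ))
    refine H.congr_deriv ?_
    simp [VM]
  · have heq : (fun t => rhoBloch r θ t 0 1)
        = (fun t : ℝ => (2:ℂ)⁻¹ * (↑r * (Complex.sin ↑θ * Complex.cos ↑t
            - Complex.I * (Complex.sin ↑θ * Complex.sin ↑t)))) := by
      funext t; simp [rho_explicit, NM, Matrix.one_apply]
    rw [heq]
    have H := ((((hcos.const_mul (Complex.sin ↑θ)).sub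
        ((hsin.const_mul (Complex.sin ↑θ)).const_mul Complex.I)).const_mul
        ((r:ℂ))).const_mul ((2:ℂ)⁻¹))
    refine H.congr_deriv ?_
    simp [VM]; try ring
  · have heq : (fun t => rhoBloch r θ t 1 0)
        = (fun t : ℝ => (2:ℂ)⁻¹ * (↑r * (Complex.sin ↑θ * Complex.cos ↑t
            + Complex.I * (Complex.sin ↑θ * Complex.sin ↑t)))) := by
      funext t; simp [rho_explicit, NM, Matrix.one_apply]
    rw [heq]
    have H := ((((hcos.const_mul (Complex.sin ↑θ)).add
        ((hsin.const_mul (Complex.sin ↑θ)).const_mul Complex.I)).const_mul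
        ((r:ℂ))).const_mul ((2:ℂ)⁻¹))
    refine H.congr_deriv ?_
    simp [VM]; try ring
  · have heq : (fun t => rhoBloch r θ t 1 1)
        = (fun _ : ℝ => (2:ℂ)⁻¹ * (1 - ↑r * Complex.cos ↑θ)) := by
      funext t; simp [rho_explicit, NM, Matrix.one_apply]; try ring
    rw [heq]
    have H := hasDerivAt_const φ ((2:ℂ)⁻¹ * (1 - ↑r * Complex.cos ↑θ))
    refine H.congr_deriv ?_
    simp [VM]


/-- For the full tomography model of a qubit in Bloch coordinates `(r, θ, φ)`, with SLD
operators `L 0, L 1, L 2` (the Hermitian solutions of the Lyapunov equations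
`∂_α ρ = (L_α ρ + ρ L_α)/2`), the Uhlmann curvature matrix
`U_{αβ} = −(i/2)Tr[ρ[L_α, L_β]]` has `U_{θφ} = r³ sinθ = −U_{φθ}` and all other
entries equal to zero. -/
theorem stmt10 (r θ φ : ℝ) (hr0 : 0 < r) (hr1 : r < 1) (hθ : θ ∈ Set.Ioo 0 Real.pi)
    (L : Fin 3 → Matrix (Fin 2) (Fin 2) ℂ)
    (hHerm : ∀ a, (L a).IsHermitian)
    (hLr : ∀ i j, HasDerivAt (fun t => rhoBloch t θ φ i j)
      (((2 : ℂ)⁻¹ • (L 0 * rhoBloch r θ φ + rhoBloch r θ φ * L 0)) i j) r)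
    (hLθ : ∀ i j, HasDerivAt (fun t => rhoBloch r t φ i j)
      (((2 : ℂ)⁻¹ • (L 1 * rhoBloch r θ φ + rhoBloch r θ φ * L 1)) i j) θ)
    (hLφ : ∀ i j, HasDerivAt (fun t => rhoBloch r θ t i j)
      (((2 : ℂ)⁻¹ • (L 2 * rhoBloch r θ φ + rhoBloch r θ φ * L 2)) i j) φ) :
    (Matrix.of fun a b : Fin 3 =>
        (-(Complex.I) / 2) * (rhoBloch r θ φ * (L a * L b - L b * L a)).trace)
      = !![0, 0, 0;
           0, 0, ((r ^ 3 * Real.sin θ : ℝ) : ℂ);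
           0, -((r ^ 3 * Real.sin θ : ℝ) : ℂ), 0] := by
  have h2ne : ((2:ℂ)⁻¹) ≠ 0 := by norm_num
  have hA : (1:ℂ) + (r:ℂ) * Complex.cos ↑θ ≠ 0 := by
    have h : (0:ℝ) < 1 + r * Real.cos θ := by
      nlinarith [Real.neg_one_le_cos θ, Real.cos_le_one θ]
    have := Complex.ofReal_ne_zero.mpr (ne_of_gt h)
    simpa [Complex.ofReal_cos] using this
  have hB : (1:ℂ) - (r:ℂ)^2 ≠ 0 := by
    have h : (0:ℝ) < 1 - r^2 := by nlinarith
    have := Complex.ofReal_ne_zero.mpr (ne_of_gt h)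
    simpa using this
  set P : Matrix (Fin 2) (Fin 2) ℂ := 1 + (r : ℂ) • NM θ φ with hP
  have hρ : rhoBloch r θ φ = (2:ℂ)⁻¹ • P := rho_explicit r θ φ
  -- turn the derivative hypotheses into Lyapunov equations w.r.t. P
  have toP : ∀ (X M : Matrix (Fin 2) (Fin 2) ℂ),
      X * rhoBloch r θ φ + rhoBloch r θ φ * X = M → X * P + P * X = (2:ℂ) • M := by
    intro X M h
    rw [hρ, mul_smul_comm, smul_mul_assoc, ← smul_add] at h
    have := congrArg (fun Y => (2:ℂ) • Y) h
    simpa [smul_smul, (by norm_num : (2:ℂ) * 2⁻¹ = 1)] using this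
  have f0 : L 0 * P + P * L 0 = (2:ℂ) • NM θ φ := by
    apply toP
    have e0 : (2:ℂ)⁻¹ • (L 0 * rhoBloch r θ φ + rhoBloch r θ φ * L 0)
        = (2:ℂ)⁻¹ • NM θ φ := by
      ext i j; exact (hLr i j).unique (deriv_r r θ φ i j)
    exact smul_right_injective _ h2ne e0
  have f1 : L 1 * P + P * L 1 = (2:ℂ) • ((r:ℂ) • UM θ φ) := by
    apply toP
    have e1 : (2:ℂ)⁻¹ • (L 1 * rhoBloch r θ φ + rhoBloch r θ φ * L 1)
        = ((2:ℂ)⁻¹ * r) • UM θ φ := by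
      ext i j; exact (hLθ i j).unique (deriv_t r θ φ i j)
    rw [← smul_smul] at e1
    exact smul_right_injective _ h2ne e1
  have f2 : L 2 * P + P * L 2 = (2:ℂ) • ((r:ℂ) • VM θ φ) := by
    apply toP
    have e2 : (2:ℂ)⁻¹ • (L 2 * rhoBloch r θ φ + rhoBloch r θ φ * L 2)
        = ((2:ℂ)⁻¹ * r) • VM θ φ := by
      ext i j; exact (hLφ i j).unique (deriv_p r θ φ i j)
    rw [← smul_smul] at e2
    exact smul_right_injective _ h2ne e2
  -- identify the SLDs
  set C0 : Matrix (Fin 2) (Fin 2) ℂ :=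
    ((1 - (r:ℂ)^2)⁻¹) • (NM θ φ - (r:ℂ) • 1) with hC0
  have g0 : C0 * P + P * C0 = (2:ℂ) • NM θ φ := by
    rw [hC0, smul_mul_assoc, mul_smul_comm, ← smul_add, key_r, smul_smul]
    rw [show ((1 - (r:ℂ)^2)⁻¹ * (2 * (1 - (r:ℂ)^2))) = 2 by field_simp]
  have g1 : ((r:ℂ) • UM θ φ) * P + P * ((r:ℂ) • UM θ φ)
      = (2:ℂ) • ((r:ℂ) • UM θ φ) := by
    rw [smul_mul_assoc, mul_smul_comm, ← smul_add, key_t, smul_comm]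
  have g2 : ((r:ℂ) • VM θ φ) * P + P * ((r:ℂ) • VM θ φ)
      = (2:ℂ) • ((r:ℂ) • VM θ φ) := by
    rw [smul_mul_assoc, mul_smul_comm, ← smul_add, key_p, smul_comm]
  have sub_lyap : ∀ (X Y M : Matrix (Fin 2) (Fin 2) ℂ),
      X * P + P * X = M → Y * P + P * Y = M → X = Y := by
    intro X Y M hX hY
    have hD : (X - Y) * P + P * (X - Y) = 0 := by
      have : (X - Y) * P + P * (X - Y) = (X * P + P * X) - (Y * P + P * Y) := by
        noncomm_ring
      rw [this, hX, hY, sub_self]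
    have := lyap_inj r θ φ hA hB (X - Y) (by rw [← hP]; exact hD)
    exact sub_eq_zero.mp this
  have hL0 : L 0 = C0 := sub_lyap _ _ _ f0 g0
  have hL1 : L 1 = (r:ℂ) • UM θ φ := sub_lyap _ _ _ f1 g1
  have hL2 : L 2 = (r:ℂ) • VM θ φ := sub_lyap _ _ _ f2 g2
  -- final computation
  have hp1 := pyth1 θ; have hp2 := pyth1 φ; have hI := Complex.I_sq
  have hfin : ∀ k : Fin 3, k = 0 ∨ k = 1 ∨ k = 2 := by decide
  ext a b
  rcases hfin a with rfl | rfl | rfl <;> rcases hfin b with rfl | rfl | rfl <;>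
    simp only [Matrix.of_apply, hL0, hL1, hL2, hC0, hρ, hP, rho2_eq, Matrix.trace,
      Matrix.diag, Fin.sum_univ_two, Matrix.mul_apply, Matrix.smul_apply,
      Matrix.sub_apply, NM, UM, VM, Matrix.one_apply, smul_eq_mul] <;>
    push_cast <;>
    simp [Matrix.mul_apply, Fin.sum_univ_two, Matrix.vecMul, dotProduct, Matrix.vecHead, Matrix.vecTail]
  all_goals try ring
  · linear_combination ((r:ℂ)^3 * Complex.sin θ * ((Complex.cos φ)^2 + (Complex.sin φ)^2)) * hp1
      + ((r:ℂ)^3 * Complex.sin θ) * hp2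
      + (-((r:ℂ)^3 * Complex.sin θ * ((Complex.cos φ)^2 + (Complex.sin φ)^2)
          * ((Complex.sin θ)^2 + (Complex.cos θ)^2))) * hI
  · linear_combination (-((r:ℂ)^3 * Complex.sin θ * ((Complex.cos φ)^2 + (Complex.sin φ)^2))) * hp1
      + (-((r:ℂ)^3 * Complex.sin θ)) * hp2
      + (((r:ℂ)^3 * Complex.sin θ * ((Complex.cos φ)^2 + (Complex.sin φ)^2)
          * ((Complex.sin θ)^2 + (Complex.cos θ)^2))) * hI
end

section
/- For 0 < r < 1 and θ ∈ (0, π), let Q = diag(1/(1−r²), r², r² sin²θ) and let U be the 3×3 real antisymmetric matrix whose only nonzero entries are U_{23} = r³ sinθ = −U_{32}. Then the eigenvalues of the matrix iQ⁻¹U are exactly {r, 0, −r}; hence the asymptotic incompatibility measure R = largest eigenvalue of iQ⁻¹U equals r, and in terms of the purity μ = (1 + r²)/2 of the corresponding qubit state one has R = √(2μ − 1). -/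
open Matrix Polynomial

/-!
In the coordinates `(r, θ, φ)` the QFI matrix `Q = diag(a, b, c)` is diagonal and the Uhlmann
curvature `U` lives in the `(θ, φ)` block with entry `u`, so `iQ⁻¹U = 0 ⊕ [[0, i u/b], [-i u/c, 0]]`,
whose characteristic polynomial is `X (X² - u²/(bc))`. For the qubit,
`u²/(bc) = r⁶ sin²θ / (r⁴ sin²θ) = r²`, giving the spectrum `{r, 0, -r}`; and `2μ - 1 = r²`.
-/

theorem Matrix.charpoly_fin_three_of_offDiag_block {R : Type*} [CommRing R] (a b : R) :
    (!![0, 0, 0; 0, 0, a; 0, b, 0] : Matrix (Fin 3) (Fin 3) R).charpoly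
      = X * (X ^ 2 - C (a * b)) := by
  rw [Matrix.charpoly, Matrix.det_fin_three]
  simp only [charmatrix_apply_eq, charmatrix_apply_ne, of_apply, cons_val', cons_val_zero,
    cons_val_one, cons_val, cons_val_fin_one, Fin.reduceEq, ne_eq, not_false_eq_true, map_zero,
    map_mul, sub_zero, mul_neg, neg_mul, neg_neg, neg_zero, mul_zero, zero_mul, add_zero, X_mul_C]
  ring

theorem Polynomial.roots_X_mul_X_sq_sub_C_sq {K : Type*} [Field K] (ρ : K) :
    (X * (X ^ 2 - C (ρ ^ 2))).roots = {ρ, 0, -ρ} := by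
  convert roots_multiset_prod_X_sub_C ({ρ, 0, -ρ} : Multiset K) using 2
  simp only [Multiset.insert_eq_cons, Multiset.map_cons, Multiset.prod_cons,
    Multiset.map_singleton, Multiset.prod_singleton, map_neg, map_pow, map_zero]
  ring

theorem Matrix.inv_diag_fin_three_mul_skew {K : Type*} [Field K] {a b c : K}
    (ha : a ≠ 0) (hb : b ≠ 0) (hc : c ≠ 0) (u : K) :
    (!![a, 0, 0; 0, b, 0; 0, 0, c])⁻¹ * !![0, 0, 0; 0, 0, u; 0, -u, 0]
      = !![0, 0, 0; 0, 0, u / b; 0, -(u / c), 0] := by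
  have hdiag : (!![a, 0, 0; 0, b, 0; 0, 0, c] : Matrix (Fin 3) (Fin 3) K)
      = diagonal ![a, b, c] := by
    ext i j; fin_cases i <;> fin_cases j <;> rfl
  have hinv : (diagonal ![a, b, c])⁻¹ = diagonal ![a⁻¹, b⁻¹, c⁻¹] := by
    refine inv_eq_left_inv ?_
    rw [diagonal_mul_diagonal, ← diagonal_one]
    congr 1; ext i; fin_cases i <;> simp [ha, hb, hc]
  rw [hdiag, hinv]
  ext i j; fin_cases i <;> fin_cases j <;> simp [div_eq_inv_mul]

theorem Matrix.charpoly_I_smul_map_ofReal_skew (p q : ℝ) :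
    (Complex.I • (!![0, 0, 0; 0, 0, p; 0, -q, 0] : Matrix (Fin 3) (Fin 3) ℝ).map
      Complex.ofReal).charpoly = X * (X ^ 2 - C ((p * q : ℝ) : ℂ)) := by
  have hsmul : Complex.I • (!![0, 0, 0; 0, 0, p; 0, -q, 0] : Matrix (Fin 3) (Fin 3) ℝ).map
      Complex.ofReal = !![0, 0, 0; 0, 0, Complex.I * p; 0, Complex.I * -q, 0] := by
    ext i j; fin_cases i <;> fin_cases j <;> simp
  rw [hsmul, charpoly_fin_three_of_offDiag_block]
  congr 3
  push_cast
  linear_combination (-(p : ℂ) * q) * Complex.I_sq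

theorem Matrix.roots_charpoly_I_smul_inv_diag_mul_skew {a b c : ℝ}
    (ha : a ≠ 0) (hb : b ≠ 0) (hc : c ≠ 0) {u ρ : ℝ} (hρ : u ^ 2 = ρ ^ 2 * (b * c)) :
    (Complex.I • ((!![a, 0, 0; 0, b, 0; 0, 0, c] : Matrix (Fin 3) (Fin 3) ℝ)⁻¹
        * !![0, 0, 0; 0, 0, u; 0, -u, 0]).map Complex.ofReal).charpoly.roots
      = {(ρ : ℂ), 0, -(ρ : ℂ)} := by
  have hprod : u / b * (u / c) = ρ ^ 2 := by
    field_simp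
    linear_combination hρ
  rw [inv_diag_fin_three_mul_skew ha hb hc, charpoly_I_smul_map_ofReal_skew, hprod,
    Complex.ofReal_pow, roots_X_mul_X_sq_sub_C_sq]

/-- For the qubit full-tomography model with `Q = diag(1/(1−r²), r², r² sin²θ)` and
Uhlmann matrix `U` with only nonzero entries `U₂₃ = r³ sinθ = −U₃₂`, the eigenvalues of
`iQ⁻¹U` are exactly `{r, 0, −r}`; hence the asymptotic incompatibility measure (the
largest eigenvalue of `iQ⁻¹U`) equals `r = √(2μ − 1)`, where `μ = (1 + r²)/2` is the
purity of the qubit state. -/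
theorem stmt11 (r θ : ℝ) (hr0 : 0 < r) (hr1 : r < 1) (hθ : θ ∈ Set.Ioo 0 Real.pi) :
    ((Complex.I • ((((!![1 / (1 - r ^ 2), 0, 0;
                        0, r ^ 2, 0;
                        0, 0, r ^ 2 * Real.sin θ ^ 2] : Matrix (Fin 3) (Fin 3) ℝ))⁻¹
        * (!![0, 0, 0;
              0, 0, r ^ 3 * Real.sin θ;
              0, -(r ^ 3 * Real.sin θ), 0] : Matrix (Fin 3) (Fin 3) ℝ)).map
          Complex.ofReal)).charpoly).roots = {(r : ℂ), 0, -(r : ℂ)} ∧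
    (∀ z ∈ ((Complex.I • ((((!![1 / (1 - r ^ 2), 0, 0;
                        0, r ^ 2, 0;
                        0, 0, r ^ 2 * Real.sin θ ^ 2] : Matrix (Fin 3) (Fin 3) ℝ))⁻¹
        * (!![0, 0, 0;
              0, 0, r ^ 3 * Real.sin θ;
              0, -(r ^ 3 * Real.sin θ), 0] : Matrix (Fin 3) (Fin 3) ℝ)).map
          Complex.ofReal)).charpoly).roots, z.re ≤ r) ∧
    Real.sqrt (2 * ((1 + r ^ 2) / 2) - 1) = r := by
  have hsin : Real.sin θ ≠ 0 := (Real.sin_pos_of_pos_of_lt_pi hθ.1 hθ.2).ne'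
  have hr : r ≠ 0 := hr0.ne'
  have hroots := roots_charpoly_I_smul_inv_diag_mul_skew (u := r ^ 3 * Real.sin θ) (ρ := r)
    (one_div_ne_zero (by nlinarith : 1 - r ^ 2 ≠ 0)) (pow_ne_zero 2 hr)
    (mul_ne_zero (pow_ne_zero 2 hr) (pow_ne_zero 2 hsin)) (by ring)
  refine ⟨hroots, ?_, ?_⟩
  · rw [hroots]
    simp only [Multiset.insert_eq_cons, Multiset.mem_cons, Multiset.mem_singleton]
    rintro z (rfl | rfl | rfl) <;> simp [hr0.le]
  · rw [show 2 * ((1 + r ^ 2) / 2) - 1 = r ^ 2 by ring, Real.sqrt_sq hr0.le]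
end

section
/- Let d ≥ 2 and let ρ = diag(x_1, …, x_d) be a d×d diagonal matrix with x_i > 0 and Σ_i x_i = 1. Let E_1, …, E_{d²−1} be any basis of the real vector space of traceless Hermitian d×d complex matrices, and for each a let L_a be the unique Hermitian matrix satisfying E_a = (L_a ρ + ρ L_a)/2. Define the (d²−1)×(d²−1) matrices Q and U by Q_{ab} = Re Tr[ρ L_a L_b] and U_{ab} = Im Tr[ρ L_a L_b]. Then Q is positive definite and the largest eigenvalue of iQ⁻¹U equals (max_i x_i − min_i x_i)/(max_i x_i + min_i x_i). -/
open Matrix Polynomial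
open scoped ComplexOrder

namespace Stmt19Aux

lemma charpoly_isRoot_iff {n : Type*} [Fintype n] [DecidableEq n]
    (M : Matrix n n ℂ) (μ : ℂ) :
    M.charpoly.IsRoot μ ↔ ∃ v, v ≠ 0 ∧ M.mulVec v = μ • v := by
  have h1 : M.charpoly.eval μ = (Matrix.diagonal (fun _ => μ) - M).det := by
    rw [Matrix.charpoly, ← Polynomial.coe_evalRingHom, RingHom.map_det]
    congr 1
    ext i j
    by_cases h : i = j <;>
      simp [h, Matrix.charmatrix_apply, Matrix.diagonal_apply, Matrix.map_apply]
  constructor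
  · intro h
    have h2 : (Matrix.diagonal (fun _ => μ) - M).det = 0 := by
      rw [← h1]; exact h
    obtain ⟨v, hv, hveq⟩ := (Matrix.exists_mulVec_eq_zero_iff).2 h2
    refine ⟨v, hv, ?_⟩
    rw [Matrix.sub_mulVec, sub_eq_zero] at hveq
    rw [← hveq]
    funext i
    simp [Matrix.mulVec_diagonal]
  · rintro ⟨v, hv, hveq⟩
    have h2 : (Matrix.diagonal (fun _ => μ) - M).mulVec v = 0 := by
      rw [Matrix.sub_mulVec, hveq]
      funext i
      simp [Matrix.mulVec_diagonal]
    have := (Matrix.exists_mulVec_eq_zero_iff).1 ⟨v, hv, h2⟩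
    rw [Polynomial.IsRoot, h1, this]

variable {d n : ℕ} (x : Fin d → ℝ) (L : Fin n → Matrix (Fin d) (Fin d) ℂ)

noncomputable def F (a b : Fin n) : ℂ :=
  (Matrix.diagonal (fun i => (x i : ℂ)) * L a * L b).trace

noncomputable def Am (v : Fin n → ℂ) : Matrix (Fin d) (Fin d) ℂ :=
  Matrix.of fun i j => ∑ b, v b * L b i j

noncomputable def Sr (v : Fin n → ℂ) : ℝ :=
  ∑ i, ∑ k, x i * Complex.normSq (Am L v k i)

noncomputable def Tr' (v : Fin n → ℂ) : ℝ :=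
  ∑ i, ∑ k, x i * Complex.normSq (Am L v i k)

lemma F_eq (a b : Fin n) :
    F x L a b = ∑ i, ∑ k, (x i : ℂ) * (L a i k * L b k i) := by
  simp only [F, Matrix.trace, Matrix.diag, Matrix.mul_apply, Matrix.diagonal_mul]
  refine Finset.sum_congr rfl fun i _ => Finset.sum_congr rfl fun k _ => ?_
  rw [Finset.sum_eq_single i (fun b _ hb => by
    simp [Matrix.diagonal_apply_ne _ (Ne.symm hb)]) (by simp)]
  simp [mul_assoc]

lemma sumF_right (w : Fin n → ℂ) (a : Fin n) :
    ∑ b, w b * F x L a b = ∑ i, ∑ k, (x i : ℂ) * (L a i k * Am L w k i) := by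
  simp only [F_eq, Am, Matrix.of_apply, Finset.mul_sum]
  rw [Finset.sum_comm]
  refine Finset.sum_congr rfl fun i _ => ?_
  rw [Finset.sum_comm]
  refine Finset.sum_congr rfl fun k _ => ?_
  ring_nf
  rw [Finset.sum_congr rfl]
  intro b _
  ring

lemma sumF_left (w : Fin n → ℂ) (a : Fin n) :
    ∑ b, w b * F x L b a = ∑ i, ∑ k, (x i : ℂ) * (Am L w i k * L a k i) := by
  simp only [F_eq, Am, Matrix.of_apply, Finset.mul_sum, Finset.sum_mul]
  rw [Finset.sum_comm]
  refine Finset.sum_congr rfl fun i _ => ?_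
  rw [Finset.sum_comm]
  refine Finset.sum_congr rfl fun k _ => ?_
  ring_nf
  rw [Finset.sum_congr rfl]
  intro b _
  ring

lemma conj_F (hL : ∀ a, (L a).IsHermitian) (a b : Fin n) :
    (starRingEnd ℂ) (F x L a b) = F x L b a := by
  simp only [F_eq, map_sum, _root_.map_mul, Complex.conj_ofReal]
  refine Finset.sum_congr rfl fun i _ => Finset.sum_congr rfl fun k _ => ?_
  rw [starRingEnd_apply, starRingEnd_apply, (hL a).apply, (hL b).apply]
  ring

lemma conj_Am (hL : ∀ a, (L a).IsHermitian) (v : Fin n → ℂ) (i j : Fin d) :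
    (starRingEnd ℂ) (Am L v i j) = ∑ b, (starRingEnd ℂ) (v b) * L b j i := by
  simp only [Am, Matrix.of_apply, map_sum, _root_.map_mul]
  refine Finset.sum_congr rfl fun b _ => ?_
  exact congrArg (fun t => star (v b) * t) ((hL b).apply j i)

lemma dot_right (hL : ∀ a, (L a).IsHermitian) (v : Fin n → ℂ) :
    ∑ a, (starRingEnd ℂ) (v a) * (∑ b, v b * F x L a b)
      = ∑ i, ∑ k, (x i : ℂ) * ((Complex.normSq (Am L v k i) : ℝ) : ℂ) := by
  simp only [sumF_right, Finset.mul_sum]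
  rw [Finset.sum_comm]
  refine Finset.sum_congr rfl fun i _ => ?_
  rw [Finset.sum_comm]
  refine Finset.sum_congr rfl fun k _ => ?_
  have h1 : ∑ a, (starRingEnd ℂ) (v a) * ((x i : ℂ) * (L a i k * Am L v k i))
      = (x i : ℂ) * ((∑ a, (starRingEnd ℂ) (v a) * L a i k) * Am L v k i) := by
    rw [Finset.sum_mul, Finset.mul_sum]
    exact Finset.sum_congr rfl fun a _ => by ring
  rw [h1, ← conj_Am L hL]
  rw [← Complex.normSq_eq_conj_mul_self]

lemma dot_left (hL : ∀ a, (L a).IsHermitian) (v : Fin n → ℂ) :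
    ∑ a, (starRingEnd ℂ) (v a) * (∑ b, v b * F x L b a)
      = ∑ i, ∑ k, (x i : ℂ) * ((Complex.normSq (Am L v i k) : ℝ) : ℂ) := by
  simp only [sumF_left, Finset.mul_sum]
  rw [Finset.sum_comm]
  refine Finset.sum_congr rfl fun i _ => ?_
  rw [Finset.sum_comm]
  refine Finset.sum_congr rfl fun k _ => ?_
  have h1 : ∑ a, (starRingEnd ℂ) (v a) * ((x i : ℂ) * (Am L v i k * L a k i))
      = (x i : ℂ) * (Am L v i k * (∑ a, (starRingEnd ℂ) (v a) * L a k i)) := by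
    rw [Finset.mul_sum, Finset.mul_sum]
    exact Finset.sum_congr rfl fun a _ => by ring
  rw [h1, ← conj_Am L hL]
  rw [mul_comm (Am L v i k), ← Complex.normSq_eq_conj_mul_self]

lemma Sr_eq (v : Fin n → ℂ) :
    Sr x L v = ∑ i, ∑ k, x k * Complex.normSq (Am L v i k) := by
  rw [Sr, Finset.sum_comm]

lemma Tr'_pos (hx : ∀ i, 0 < x i) (v : Fin n → ℂ) (h : Am L v ≠ 0) :
    0 < Tr' x L v := by
  have : ∃ i k, Am L v i k ≠ 0 := by
    by_contra hc
    push_neg at hc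
    exact h (by ext i j; exact hc i j)
  obtain ⟨i0, k0, h0⟩ := this
  refine Finset.sum_pos' (fun i _ => Finset.sum_nonneg fun k _ =>
    mul_nonneg (hx i).le (Complex.normSq_nonneg _)) ⟨i0, Finset.mem_univ _, ?_⟩
  refine Finset.sum_pos' (fun k _ => mul_nonneg (hx i0).le (Complex.normSq_nonneg _))
    ⟨k0, Finset.mem_univ _, mul_pos (hx i0) (Complex.normSq_pos.2 h0)⟩

lemma Sr_nonneg (hx : ∀ i, 0 < x i) (v : Fin n → ℂ) : 0 ≤ Sr x L v :=
  Finset.sum_nonneg fun i _ => Finset.sum_nonneg fun k _ =>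
    mul_nonneg (hx i).le (Complex.normSq_nonneg _)

lemma key_ineq (Δ : ℝ)
    (hcoef : ∀ i k, (1 - Δ) * x k ≤ (1 + Δ) * x i) (v : Fin n → ℂ) :
    Sr x L v - Tr' x L v ≤ Δ * (Sr x L v + Tr' x L v) := by
  have h1 : (1 - Δ) * Sr x L v ≤ (1 + Δ) * Tr' x L v := by
    rw [Sr_eq, Tr', Finset.mul_sum, Finset.mul_sum]
    refine Finset.sum_le_sum fun i _ => ?_
    rw [Finset.mul_sum, Finset.mul_sum]
    refine Finset.sum_le_sum fun k _ => ?_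
    have := mul_le_mul_of_nonneg_right (hcoef i k) (Complex.normSq_nonneg (Am L v i k))
    calc (1 - Δ) * (x k * Complex.normSq (Am L v i k))
        = (1 - Δ) * x k * Complex.normSq (Am L v i k) := by ring
      _ ≤ (1 + Δ) * x i * Complex.normSq (Am L v i k) := this
      _ = (1 + Δ) * (x i * Complex.normSq (Am L v i k)) := by ring
  linarith

lemma Qc2 (hconjF : ∀ a b, (starRingEnd ℂ) (F x L a b) = F x L b a) (a b : Fin n) :
    (2:ℂ) * (((Matrix.of fun a b => (F x L a b).re).map Complex.ofReal) a b)
      = F x L a b + F x L b a := by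
  rw [Matrix.map_apply, Matrix.of_apply, ← hconjF a b, Complex.add_conj]
  push_cast
  ring

lemma Uc2 (hconjF : ∀ a b, (starRingEnd ℂ) (F x L a b) = F x L b a) (a b : Fin n) :
    (2:ℂ) * Complex.I * (((Matrix.of fun a b => (F x L a b).im).map Complex.ofReal) a b)
      = F x L a b - F x L b a := by
  rw [Matrix.map_apply, Matrix.of_apply, ← hconjF a b, Complex.sub_conj]
  push_cast
  ring

lemma Qmap_mulVec (hconjF : ∀ a b, (starRingEnd ℂ) (F x L a b) = F x L b a)
    (w : Fin n → ℂ) (a : Fin n) :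
    (2:ℂ) * ((((Matrix.of fun a b => (F x L a b).re).map Complex.ofReal).mulVec w) a)
      = (∑ b, w b * F x L a b) + (∑ b, w b * F x L b a) := by
  simp only [Matrix.mulVec, dotProduct]
  rw [Finset.mul_sum, ← Finset.sum_add_distrib]
  refine Finset.sum_congr rfl fun b _ => ?_
  have h := Qc2 x L hconjF a b
  calc (2:ℂ) * ((((Matrix.of fun a b => (F x L a b).re).map Complex.ofReal)) a b * w b)
      = ((2:ℂ) * (((Matrix.of fun a b => (F x L a b).re).map Complex.ofReal) a b)) * w b := by
        ring
    _ = (F x L a b + F x L b a) * w b := by rw [h]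
    _ = w b * F x L a b + w b * F x L b a := by ring

lemma Umap_mulVec (hconjF : ∀ a b, (starRingEnd ℂ) (F x L a b) = F x L b a)
    (w : Fin n → ℂ) (a : Fin n) :
    (2:ℂ) * Complex.I * ((((Matrix.of fun a b => (F x L a b).im).map Complex.ofReal).mulVec w) a)
      = (∑ b, w b * F x L a b) - (∑ b, w b * F x L b a) := by
  simp only [Matrix.mulVec, dotProduct]
  rw [Finset.mul_sum, ← Finset.sum_sub_distrib]
  refine Finset.sum_congr rfl fun b _ => ?_
  have h := Uc2 x L hconjF a b
  calc (2:ℂ) * Complex.I * ((((Matrix.of fun a b => (F x L a b).im).map Complex.ofReal)) a b * w b)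
      = ((2:ℂ) * Complex.I * (((Matrix.of fun a b => (F x L a b).im).map Complex.ofReal) a b)) * w b := by
        ring
    _ = (F x L a b - F x L b a) * w b := by rw [h]
    _ = w b * F x L a b - w b * F x L b a := by ring

lemma dot_right' (hL : ∀ a, (L a).IsHermitian) (v : Fin n → ℂ) :
    ∑ a, (starRingEnd ℂ) (v a) * (∑ b, v b * F x L a b) = ((Sr x L v : ℝ) : ℂ) := by
  rw [dot_right x L hL v, Sr]
  push_cast
  rfl

lemma dot_left' (hL : ∀ a, (L a).IsHermitian) (v : Fin n → ℂ) :
    ∑ a, (starRingEnd ℂ) (v a) * (∑ b, v b * F x L b a) = ((Tr' x L v : ℝ) : ℂ) := by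
  rw [dot_left x L hL v, Tr']
  push_cast
  rfl

lemma Qmap_dot (hL : ∀ a, (L a).IsHermitian)
    (hconjF : ∀ a b, (starRingEnd ℂ) (F x L a b) = F x L b a) (v : Fin n → ℂ) :
    (2:ℂ) * (star v ⬝ᵥ (((Matrix.of fun a b => (F x L a b).re).map Complex.ofReal).mulVec v))
      = ((Sr x L v + Tr' x L v : ℝ) : ℂ) := by
  have h1 : (2:ℂ) * (star v ⬝ᵥ (((Matrix.of fun a b => (F x L a b).re).map Complex.ofReal).mulVec v))
      = ∑ a, (starRingEnd ℂ) (v a) *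
          ((∑ b, v b * F x L a b) + (∑ b, v b * F x L b a)) := by
    simp only [dotProduct, Pi.star_apply]
    rw [Finset.mul_sum]
    refine Finset.sum_congr rfl fun a _ => ?_
    rw [← Qmap_mulVec x L hconjF v a]
    rw [RCLike.star_def]
    ring
  rw [h1]
  simp only [mul_add, Finset.sum_add_distrib]
  rw [dot_right' x L hL v, dot_left' x L hL v]
  push_cast
  ring

lemma Umap_dot (hL : ∀ a, (L a).IsHermitian)
    (hconjF : ∀ a b, (starRingEnd ℂ) (F x L a b) = F x L b a) (v : Fin n → ℂ) :
    (2:ℂ) * Complex.I * (star v ⬝ᵥ (((Matrix.of fun a b => (F x L a b).im).map Complex.ofReal).mulVec v))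
      = ((Sr x L v - Tr' x L v : ℝ) : ℂ) := by
  have h1 : (2:ℂ) * Complex.I * (star v ⬝ᵥ (((Matrix.of fun a b => (F x L a b).im).map Complex.ofReal).mulVec v))
      = ∑ a, (starRingEnd ℂ) (v a) *
          ((∑ b, v b * F x L a b) - (∑ b, v b * F x L b a)) := by
    simp only [dotProduct, Pi.star_apply]
    rw [Finset.mul_sum]
    refine Finset.sum_congr rfl fun a _ => ?_
    rw [← Umap_mulVec x L hconjF v a]
    rw [RCLike.star_def]
    ring
  rw [h1]
  simp only [mul_sub, Finset.sum_sub_distrib]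
  rw [dot_right' x L hL v, dot_left' x L hL v]
  push_cast
  ring

end Stmt19Aux

/-- Asymptotic incompatibility of full tomography of a `d`-dimensional quantum state: let
`ρ = diag(x₁, …, x_d)` with `xᵢ > 0`, `Σᵢ xᵢ = 1`, let `E₁, …, E_{d²−1}` be a basis of
the real vector space of traceless Hermitian matrices, `L_a` the Hermitian solutions of
the Lyapunov equations `E_a = (L_aρ + ρL_a)/2`, and `Q = Re Tr[ρL_aL_b]`,
`U = Im Tr[ρL_aL_b]`. Then `Q` is positive definite and the largest eigenvalue of
`iQ⁻¹U` equals `(maxᵢ xᵢ − minᵢ xᵢ)/(maxᵢ xᵢ + minᵢ xᵢ)`. -/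
theorem stmt19 (d : ℕ) (hd : 2 ≤ d) (x : Fin d → ℝ)
    (hx_pos : ∀ i, 0 < x i) (hx_sum : ∑ i, x i = 1)
    (xmax xmin : ℝ)
    (hmax : IsGreatest (Set.range x) xmax) (hmin : IsLeast (Set.range x) xmin)
    (E : Fin (d ^ 2 - 1) → Matrix (Fin d) (Fin d) ℂ)
    (hE_herm : ∀ a, (E a).IsHermitian) (hE_tr : ∀ a, (E a).trace = 0)
    (hE_indep : LinearIndependent ℝ E)
    (hE_span : ∀ M : Matrix (Fin d) (Fin d) ℂ, M.IsHermitian → M.trace = 0 →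
      M ∈ Submodule.span ℝ (Set.range E))
    (L : Fin (d ^ 2 - 1) → Matrix (Fin d) (Fin d) ℂ)
    (hL_herm : ∀ a, (L a).IsHermitian)
    (hL_lyap : ∀ a, E a = (2 : ℂ)⁻¹
      • (L a * Matrix.diagonal (fun i => (x i : ℂ))
          + Matrix.diagonal (fun i => (x i : ℂ)) * L a))
    (Q U : Matrix (Fin (d ^ 2 - 1)) (Fin (d ^ 2 - 1)) ℝ)
    (hQ : Q = Matrix.of fun a b =>
      ((Matrix.diagonal (fun i => (x i : ℂ)) * L a * L b).trace).re)
    (hU : U = Matrix.of fun a b =>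
      ((Matrix.diagonal (fun i => (x i : ℂ)) * L a * L b).trace).im) :
    Q.PosDef ∧
    (((xmax - xmin) / (xmax + xmin) : ℝ) : ℂ)
      ∈ ((Complex.I • ((Q⁻¹ * U).map Complex.ofReal)).charpoly).roots ∧
    (∀ z ∈ ((Complex.I • ((Q⁻¹ * U).map Complex.ofReal)).charpoly).roots,
      z.re ≤ (xmax - xmin) / (xmax + xmin)) := by
  subst hQ
  subst hU
  -- basic facts
  have hconjF : ∀ a b, (starRingEnd ℂ) (Stmt19Aux.F x L a b) = Stmt19Aux.F x L b a :=
    Stmt19Aux.conj_F x L hL_herm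
  have hxmin_mem := hmin.1
  have hxmax_mem := hmax.1
  obtain ⟨s0, hs0⟩ := hxmin_mem
  obtain ⟨t0, ht0⟩ := hxmax_mem
  have hxmin_pos : 0 < xmin := hs0 ▸ hx_pos s0
  have hxmax_pos : 0 < xmax := ht0 ▸ hx_pos t0
  have hminmax : xmin ≤ xmax := by
    have := hmax.2 ⟨s0, rfl⟩
    linarith [hs0 ▸ this]
  have hsum_pos : 0 < xmax + xmin := by linarith
  set Δ : ℝ := (xmax - xmin) / (xmax + xmin) with hΔdef
  have hΔ_nonneg : 0 ≤ Δ := div_nonneg (by linarith) hsum_pos.le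
  have hxle : ∀ i, x i ≤ xmax := fun i => hmax.2 ⟨i, rfl⟩
  have hxge : ∀ i, xmin ≤ x i := fun i => hmin.2 ⟨i, rfl⟩
  have hcoef : ∀ i k : Fin d, (1 - Δ) * x k ≤ (1 + Δ) * x i := by
    intro i k
    have e1 : (1 - Δ) * (xmax + xmin) = 2 * xmin := by
      rw [hΔdef]; field_simp; ring
    have e2 : (1 + Δ) * (xmax + xmin) = 2 * xmax := by
      rw [hΔdef]; field_simp; ring
    have h3 : ((1 - Δ) * x k) * (xmax + xmin) ≤ ((1 + Δ) * x i) * (xmax + xmin) := by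
      have l1 : ((1 - Δ) * x k) * (xmax + xmin) = 2 * (xmin * x k) := by
        calc ((1 - Δ) * x k) * (xmax + xmin) = ((1 - Δ) * (xmax + xmin)) * x k := by ring
          _ = 2 * (xmin * x k) := by rw [e1]; ring
      have l2 : ((1 + Δ) * x i) * (xmax + xmin) = 2 * (xmax * x i) := by
        calc ((1 + Δ) * x i) * (xmax + xmin) = ((1 + Δ) * (xmax + xmin)) * x i := by ring
          _ = 2 * (xmax * x i) := by rw [e2]; ring
      rw [l1, l2]
      nlinarith [hxle k, hxge i, hxmin_pos, hx_pos k, hx_pos i]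
    exact le_of_mul_le_mul_right h3 hsum_pos
  -- entrywise Lyapunov relation
  have hE_entry : ∀ b (i j : Fin d),
      E b i j = (2:ℂ)⁻¹ * ((x i : ℂ) + (x j : ℂ)) * L b i j := by
    intro b i j
    rw [hL_lyap b]
    simp only [Matrix.smul_apply, Matrix.add_apply, Matrix.mul_diagonal,
      Matrix.diagonal_mul, smul_eq_mul]
    ring
  -- injectivity of v ↦ Am L v
  have hA0 : ∀ v : Fin (d ^ 2 - 1) → ℂ, Stmt19Aux.Am L v = 0 → v = 0 := by
    intro v hAm
    have hEsum : ∀ i j : Fin d, ∑ b, v b * E b i j = 0 := by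
      intro i j
      have hentry : Stmt19Aux.Am L v i j = 0 := by rw [hAm]; rfl
      calc ∑ b, v b * E b i j
          = (2:ℂ)⁻¹ * ((x i : ℂ) + (x j : ℂ)) * ∑ b, v b * L b i j := by
            rw [Finset.mul_sum]
            exact Finset.sum_congr rfl fun b _ => by rw [hE_entry]; ring
        _ = 0 := by
            rw [show (∑ b, v b * L b i j) = Stmt19Aux.Am L v i j from rfl, hentry, mul_zero]
    have hEsum' : ∀ i j : Fin d, ∑ b, (starRingEnd ℂ) (v b) * E b i j = 0 := by
      intro i j
      have hc : ∀ b, (starRingEnd ℂ) (E b j i) = E b i j := fun b => (hE_herm b).apply i j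
      have := congrArg (starRingEnd ℂ) (hEsum j i)
      simp only [map_sum, _root_.map_mul, map_zero] at this
      rw [← this]
      exact Finset.sum_congr rfl fun b _ => by rw [hc b]
    have hp : ∀ i j : Fin d, ∑ b, (((v b).re : ℝ) : ℂ) * E b i j = 0 := by
      intro i j
      have h3 : ∑ b, ((2:ℂ) * (((v b).re : ℝ) : ℂ)) * E b i j = 0 := by
        calc ∑ b, ((2:ℂ) * (((v b).re : ℝ) : ℂ)) * E b i j
            = ∑ b, (v b * E b i j + (starRingEnd ℂ) (v b) * E b i j) := by
              refine Finset.sum_congr rfl fun b _ => ?_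
              rw [show (2:ℂ) * (((v b).re : ℝ) : ℂ) = v b + (starRingEnd ℂ) (v b) by
                rw [Complex.add_conj]; push_cast; ring]
              ring
          _ = 0 := by rw [Finset.sum_add_distrib, hEsum i j, hEsum' i j, add_zero]
      have h4 : (2:ℂ) * ∑ b, (((v b).re : ℝ) : ℂ) * E b i j = 0 := by
        rw [Finset.mul_sum, ← h3]
        exact Finset.sum_congr rfl fun b _ => by ring
      exact (mul_eq_zero.1 h4).resolve_left two_ne_zero
    have hq : ∀ i j : Fin d, ∑ b, (((v b).im : ℝ) : ℂ) * E b i j = 0 := by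
      intro i j
      have h3 : ∑ b, ((2:ℂ) * Complex.I * (((v b).im : ℝ) : ℂ)) * E b i j = 0 := by
        calc ∑ b, ((2:ℂ) * Complex.I * (((v b).im : ℝ) : ℂ)) * E b i j
            = ∑ b, (v b * E b i j - (starRingEnd ℂ) (v b) * E b i j) := by
              refine Finset.sum_congr rfl fun b _ => ?_
              rw [show (2:ℂ) * Complex.I * (((v b).im : ℝ) : ℂ)
                  = v b - (starRingEnd ℂ) (v b) by rw [Complex.sub_conj]; push_cast; ring]
              ring
          _ = 0 := by rw [Finset.sum_sub_distrib, hEsum i j, hEsum' i j, sub_zero]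
      have h4 : ((2:ℂ) * Complex.I) * ∑ b, (((v b).im : ℝ) : ℂ) * E b i j = 0 := by
        rw [Finset.mul_sum, ← h3]
        exact Finset.sum_congr rfl fun b _ => by ring
      have h2I : ((2:ℂ) * Complex.I) ≠ 0 := by simp [Complex.I_ne_zero]
      exact (mul_eq_zero.1 h4).resolve_left h2I
    have hp0 : ∀ b, (v b).re = 0 := by
      have hmat : ∑ b, (fun b => (v b).re) b • E b = 0 := by
        ext i j
        rw [Matrix.sum_apply]
        simp only [Matrix.smul_apply, Matrix.zero_apply]
        rw [← hp i j]
        exact Finset.sum_congr rfl fun b _ => by rw [Complex.real_smul]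
      exact Fintype.linearIndependent_iff.1 hE_indep _ hmat
    have hq0 : ∀ b, (v b).im = 0 := by
      have hmat : ∑ b, (fun b => (v b).im) b • E b = 0 := by
        ext i j
        rw [Matrix.sum_apply]
        simp only [Matrix.smul_apply, Matrix.zero_apply]
        rw [← hq i j]
        exact Finset.sum_congr rfl fun b _ => by rw [Complex.real_smul]
      exact Fintype.linearIndependent_iff.1 hE_indep _ hmat
    funext b
    exact Complex.ext (hp0 b) (hq0 b)
  -- rewrite the goal in terms of F
  have hQof : (Matrix.of fun a b =>
        ((Matrix.diagonal (fun i => (x i : ℂ)) * L a * L b).trace).re)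
      = (Matrix.of fun a b => ((Stmt19Aux.F x L a b).re)) := rfl
  have hUof : (Matrix.of fun a b =>
        ((Matrix.diagonal (fun i => (x i : ℂ)) * L a * L b).trace).im)
      = (Matrix.of fun a b => ((Stmt19Aux.F x L a b).im)) := rfl
  rw [hQof, hUof]
  set Qm : Matrix (Fin (d ^ 2 - 1)) (Fin (d ^ 2 - 1)) ℝ :=
    Matrix.of fun a b => ((Stmt19Aux.F x L a b).re) with hQmdef
  set Um : Matrix (Fin (d ^ 2 - 1)) (Fin (d ^ 2 - 1)) ℝ :=
    Matrix.of fun a b => ((Stmt19Aux.F x L a b).im) with hUmdef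
  -- positive definiteness
  have hQsymm : ∀ a b, Qm a b = Qm b a := by
    intro a b
    show (Stmt19Aux.F x L a b).re = (Stmt19Aux.F x L b a).re
    rw [← hconjF a b, Complex.conj_re]
  have hQpd : Qm.PosDef := by
    rw [Matrix.posDef_iff_dotProduct_mulVec]
    constructor
    · ext a b
      rw [Matrix.conjTranspose_apply, star_trivial]
      exact hQsymm b a
    · intro v hv
      set vc : Fin (d ^ 2 - 1) → ℂ := fun a => ((v a : ℝ) : ℂ) with hvcdef
      have hvc0 : vc ≠ 0 := by
        intro h
        apply hv
        funext a
        have := congrFun h a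
        simpa [hvcdef] using this
      have hstar : star vc = vc := by
        funext a
        simp [hvcdef, Complex.conj_ofReal]
      have hcast : ((star v ⬝ᵥ Qm.mulVec v : ℝ) : ℂ)
          = star vc ⬝ᵥ ((Qm.map Complex.ofReal).mulVec vc) := by
        rw [hstar]
        simp only [dotProduct, Matrix.mulVec, Matrix.map_apply, hvcdef,
          star_trivial, Pi.star_apply]
        push_cast
        rfl
      have hdot := Stmt19Aux.Qmap_dot x L hL_herm hconjF vc
      rw [← hQmdef] at hdot
      have h2 : (2:ℂ) * ((star v ⬝ᵥ Qm.mulVec v : ℝ) : ℂ)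
          = ((Stmt19Aux.Sr x L vc + Stmt19Aux.Tr' x L vc : ℝ) : ℂ) := by
        rw [hcast]; exact hdot
      have h3 : 2 * (star v ⬝ᵥ Qm.mulVec v)
          = Stmt19Aux.Sr x L vc + Stmt19Aux.Tr' x L vc := by
        exact_mod_cast h2
      have hAmne : Stmt19Aux.Am L vc ≠ 0 := fun h => hvc0 (hA0 vc h)
      have hTpos := Stmt19Aux.Tr'_pos x L hx_pos vc hAmne
      have hSnn := Stmt19Aux.Sr_nonneg x L hx_pos vc
      linarith
  have hQdet : IsUnit Qm.det := isUnit_iff_ne_zero.2 hQpd.det_pos.ne'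
  -- complexified inverse identities
  have hmapmul : ((Qm⁻¹ * Um).map Complex.ofReal)
      = (Qm⁻¹.map Complex.ofReal) * (Um.map Complex.ofReal) :=
    Matrix.map_mul (f := Complex.ofRealHom)
  have hQinvL : (Qm⁻¹.map Complex.ofReal) * (Qm.map Complex.ofReal) = 1 := by
    have h1 : ((Qm⁻¹ * Qm).map Complex.ofReal)
        = (Qm⁻¹.map Complex.ofReal) * (Qm.map Complex.ofReal) :=
      Matrix.map_mul (f := Complex.ofRealHom)
    rw [← h1, Matrix.nonsing_inv_mul Qm hQdet]
    exact Matrix.map_one _ (by simp) (by simp)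
  have hQinvR : (Qm.map Complex.ofReal) * (Qm⁻¹.map Complex.ofReal) = 1 := by
    have h1 : ((Qm * Qm⁻¹).map Complex.ofReal)
        = (Qm.map Complex.ofReal) * (Qm⁻¹.map Complex.ofReal) :=
      Matrix.map_mul (f := Complex.ofRealHom)
    rw [← h1, Matrix.mul_nonsing_inv Qm hQdet]
    exact Matrix.map_one _ (by simp) (by simp)
  -- choose the extremal pair
  obtain ⟨s, t, hst, hd'⟩ : ∃ s t : Fin d, s ≠ t ∧ x t - x s = Δ * (x s + x t) := by
    by_cases h : s0 = t0
    · have hminmax' : xmax = xmin := by rw [← hs0, ← ht0, h]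
      have hΔ0 : Δ = 0 := by rw [hΔdef, hminmax']; simp
      have hall : ∀ i, x i = xmin := fun i =>
        le_antisymm (hminmax' ▸ hxle i) (hxge i)
      refine ⟨⟨0, by omega⟩, ⟨1, by omega⟩, by simp [Fin.ext_iff], ?_⟩
      rw [hall, hall, hΔ0]; ring
    · refine ⟨s0, t0, h, ?_⟩
      rw [hs0, ht0, hΔdef]
      field_simp
      ring
  have hxC : ∀ k l : Fin d, ((x k : ℂ) + (x l : ℂ)) ≠ 0 := by
    intro k l h
    have h2 : ((x k + x l : ℝ) : ℂ) = 0 := by push_cast; exact h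
    have h3 : x k + x l = 0 := by exact_mod_cast h2
    linarith [hx_pos k, hx_pos l]
  set c : ℂ := 2 / ((x s : ℂ) + (x t : ℂ)) with hcdef
  have hc0 : c ≠ 0 := div_ne_zero two_ne_zero (hxC s t)
  -- Hermitian traceless matrices spanning the eigen-matrix
  set H₁ : Matrix (Fin d) (Fin d) ℂ := Matrix.of fun k l =>
    (if k = s ∧ l = t then (2:ℂ)⁻¹ else 0)
      + (if k = t ∧ l = s then (2:ℂ)⁻¹ else 0) with hH₁def
  set H₂ : Matrix (Fin d) (Fin d) ℂ := Matrix.of fun k l =>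
    (if k = s ∧ l = t then -(Complex.I)/2 else 0)
      + (if k = t ∧ l = s then Complex.I/2 else 0) with hH₂def
  have hH₁herm : H₁.IsHermitian := by
    show H₁ᴴ = H₁
    ext k l
    simp only [Matrix.conjTranspose_apply, hH₁def, Matrix.of_apply]
    by_cases h1 : k = s <;> by_cases h2 : l = t <;> by_cases h3 : k = t <;>
      by_cases h4 : l = s <;> simp [h1, h2, h3, h4, hst, hst.symm]
  have hH₂herm : H₂.IsHermitian := by
    show H₂ᴴ = H₂
    ext k l
    simp only [Matrix.conjTranspose_apply, hH₂def, Matrix.of_apply]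
    by_cases h1 : k = s <;> by_cases h2 : l = t <;> by_cases h3 : k = t <;>
      by_cases h4 : l = s <;> simp [h1, h2, h3, h4, hst, hst.symm, Complex.ext_iff]
  have hH₁tr : H₁.trace = 0 := by
    rw [Matrix.trace]
    refine Finset.sum_eq_zero fun k _ => ?_
    simp only [Matrix.diag_apply, hH₁def, Matrix.of_apply]
    have hns : ¬(k = s ∧ k = t) := fun h => hst (h.1.symm.trans h.2)
    have hnt : ¬(k = t ∧ k = s) := fun h => hst (h.2.symm.trans h.1)
    simp [hns, hnt]
  have hH₂tr : H₂.trace = 0 := by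
    rw [Matrix.trace]
    refine Finset.sum_eq_zero fun k _ => ?_
    simp only [Matrix.diag_apply, hH₂def, Matrix.of_apply]
    have hns : ¬(k = s ∧ k = t) := fun h => hst (h.1.symm.trans h.2)
    have hnt : ¬(k = t ∧ k = s) := fun h => hst (h.2.symm.trans h.1)
    simp [hns, hnt]
  have hG : ∀ k l : Fin d, H₁ k l + Complex.I * H₂ k l
      = (if k = s ∧ l = t then (1:ℂ) else 0) := by
    intro k l
    simp only [hH₁def, hH₂def, Matrix.of_apply]
    have hne : ¬((k = s ∧ l = t) ∧ (k = t ∧ l = s)) := by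
      rintro ⟨⟨h1, h2⟩, ⟨h3, h4⟩⟩
      exact hst (h1.symm.trans h3)
    rcases Classical.em (k = s ∧ l = t) with h1 | h1 <;>
      rcases Classical.em (k = t ∧ l = s) with h2 | h2
    · exact absurd ⟨h1, h2⟩ hne
    · rw [if_pos h1, if_neg h2, if_pos h1, if_neg h2, if_pos h1]
      linear_combination (-(1:ℂ)/2) * Complex.I_mul_I
    · rw [if_neg h1, if_pos h2, if_neg h1, if_pos h2, if_neg h1]
      linear_combination ((1:ℂ)/2) * Complex.I_mul_I
    · rw [if_neg h1, if_neg h2, if_neg h1, if_neg h2, if_neg h1]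
      ring
  obtain ⟨p, hp⟩ := (Submodule.mem_span_range_iff_exists_fun ℝ).1
    (hE_span H₁ hH₁herm hH₁tr)
  obtain ⟨q, hq⟩ := (Submodule.mem_span_range_iff_exists_fun ℝ).1
    (hE_span H₂ hH₂herm hH₂tr)
  set v : Fin (d ^ 2 - 1) → ℂ := fun b => ((p b : ℝ) : ℂ) + ((q b : ℝ) : ℂ) * Complex.I
    with hvdef
  have hpE : ∀ k l : Fin d, ∑ b, ((p b : ℝ) : ℂ) * E b k l = H₁ k l := by
    intro k l
    have h1 := congrArg (fun M : Matrix (Fin d) (Fin d) ℂ => M k l) hp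
    simp only [Matrix.sum_apply, Matrix.smul_apply, Complex.real_smul] at h1
    exact h1
  have hqE : ∀ k l : Fin d, ∑ b, ((q b : ℝ) : ℂ) * E b k l = H₂ k l := by
    intro k l
    have h1 := congrArg (fun M : Matrix (Fin d) (Fin d) ℂ => M k l) hq
    simp only [Matrix.sum_apply, Matrix.smul_apply, Complex.real_smul] at h1
    exact h1
  have hvE : ∀ k l : Fin d, (∑ b, v b * E b k l)
      = (if k = s ∧ l = t then (1:ℂ) else 0) := by
    intro k l
    calc ∑ b, v b * E b k l
        = (∑ b, ((p b : ℝ) : ℂ) * E b k l)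
          + Complex.I * ∑ b, ((q b : ℝ) : ℂ) * E b k l := by
          rw [Finset.mul_sum, ← Finset.sum_add_distrib]
          exact Finset.sum_congr rfl fun b _ => by rw [hvdef]; ring
      _ = H₁ k l + Complex.I * H₂ k l := by rw [hpE, hqE]
      _ = _ := hG k l
  have hAv : ∀ k l : Fin d, Stmt19Aux.Am L v k l = (if k = s ∧ l = t then c else 0) := by
    intro k l
    have h1 : (2:ℂ)⁻¹ * ((x k : ℂ) + (x l : ℂ)) * Stmt19Aux.Am L v k l
        = (if k = s ∧ l = t then (1:ℂ) else 0) := by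
      rw [← hvE k l,
        show Stmt19Aux.Am L v k l = ∑ b, v b * L b k l from rfl, Finset.mul_sum]
      exact Finset.sum_congr rfl fun b _ => by rw [hE_entry b k l]; ring
    have hne : (2:ℂ)⁻¹ * ((x k : ℂ) + (x l : ℂ)) ≠ 0 :=
      mul_ne_zero (inv_ne_zero two_ne_zero) (hxC k l)
    by_cases h : k = s ∧ l = t
    · simp only [h, and_self, if_true] at h1 ⊢
      rw [eq_div_iff (hxC s t)]
      linear_combination (2:ℂ) * h1
    · simp only [h, if_false] at h1 ⊢
      exact (mul_eq_zero.1 h1).resolve_left hne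
  have hv0 : v ≠ 0 := by
    intro h
    have hAm0 : Stmt19Aux.Am L v s t = c := by rw [hAv]; simp
    rw [h] at hAm0
    simp only [Stmt19Aux.Am, Matrix.of_apply, Pi.zero_apply, zero_mul,
      Finset.sum_const_zero] at hAm0
    exact hc0 hAm0.symm
  have hsum1 : ∀ a, ∑ b, v b * Stmt19Aux.F x L a b = (x t : ℂ) * (L a t s * c) := by
    intro a
    rw [Stmt19Aux.sumF_right]
    have hterm : ∀ i k : Fin d, (x i : ℂ) * (L a i k * Stmt19Aux.Am L v k i)
        = if k = s then (if i = t then (x i : ℂ) * (L a i k * c) else 0) else 0 := by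
      intro i k
      rw [hAv]
      by_cases h1 : k = s <;> by_cases h2 : i = t <;> simp [h1, h2]
    simp only [hterm]
    rw [Finset.sum_comm]
    rw [Finset.sum_eq_single s (fun k _ hk => Finset.sum_eq_zero fun i _ => by
      simp [hk]) (by simp)]
    rw [Finset.sum_eq_single t (fun i _ hi => by simp [hi]) (by simp)]
    simp
  have hsum2 : ∀ a, ∑ b, v b * Stmt19Aux.F x L b a = (x s : ℂ) * (c * L a t s) := by
    intro a
    rw [Stmt19Aux.sumF_left]
    have hterm : ∀ i k : Fin d, (x i : ℂ) * (Stmt19Aux.Am L v i k * L a k i)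
        = if i = s then (if k = t then (x i : ℂ) * (c * L a k i) else 0) else 0 := by
      intro i k
      rw [hAv]
      by_cases h1 : i = s <;> by_cases h2 : k = t <;> simp [h1, h2]
    simp only [hterm]
    rw [Finset.sum_eq_single s (fun i _ hi => Finset.sum_eq_zero fun k _ => by
      simp [hi]) (by simp)]
    rw [Finset.sum_eq_single t (fun k _ hk => by simp [hk]) (by simp)]
    simp
  have hdC : ((x t : ℂ) - (x s : ℂ)) = ((Δ : ℝ) : ℂ) * ((x s : ℂ) + (x t : ℂ)) := by
    have := congrArg (Complex.ofReal) hd'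
    push_cast at this ⊢
    exact_mod_cast this
  have heig : (Um.map Complex.ofReal).mulVec v
      = (-(Complex.I) * ((Δ : ℝ) : ℂ)) • ((Qm.map Complex.ofReal).mulVec v) := by
    funext a
    have e1 := Stmt19Aux.Umap_mulVec x L hconjF v a
    have e2 := Stmt19Aux.Qmap_mulVec x L hconjF v a
    rw [hsum1 a, hsum2 a] at e1 e2
    rw [← hUmdef] at e1
    rw [← hQmdef] at e2
    simp only [Pi.smul_apply, smul_eq_mul]
    have h2I : ((2:ℂ) * Complex.I) ≠ 0 := by simp [Complex.I_ne_zero]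
    apply mul_left_cancel₀ h2I
    rw [show ((Qm.map Complex.ofReal).mulVec v) a
        = 2⁻¹ * ((x t : ℂ) * (L a t s * c) + (x s : ℂ) * (c * L a t s)) from by
      linear_combination (2:ℂ)⁻¹ * e2]
    linear_combination e1
      + (((Δ:ℝ):ℂ) * ((x t : ℂ) * (L a t s * c) + (x s : ℂ) * (c * L a t s)))
        * Complex.I_mul_I
      + (c * L a t s) * hdC
  have hMv : (Complex.I • ((Qm⁻¹ * Um).map Complex.ofReal)).mulVec v
      = (((Δ:ℝ):ℂ)) • v := by
    rw [Matrix.smul_mulVec, hmapmul, ← Matrix.mulVec_mulVec, heig,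
      Matrix.mulVec_smul, Matrix.mulVec_mulVec, hQinvL, Matrix.one_mulVec, smul_smul]
    congr 1
    linear_combination (-(((Δ:ℝ):ℂ))) * Complex.I_mul_I
  refine ⟨hQpd, ?_, ?_⟩
  · rw [Polynomial.mem_roots']
    exact ⟨(Matrix.charpoly_monic _).ne_zero,
      (Stmt19Aux.charpoly_isRoot_iff _ _).2 ⟨v, hv0, hMv⟩⟩
  · intro z hz
    have hroot := (Polynomial.mem_roots'.1 hz).2
    obtain ⟨w, hw, hMw⟩ := (Stmt19Aux.charpoly_isRoot_iff _ _).1 hroot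
    have h2 : Complex.I • ((Um.map Complex.ofReal).mulVec w)
        = z • ((Qm.map Complex.ofReal).mulVec w) := by
      have h3 := congrArg (fun u => (Qm.map Complex.ofReal).mulVec u) hMw
      rw [Matrix.smul_mulVec, hmapmul, Matrix.mulVec_smul,
        Matrix.mulVec_mulVec, ← Matrix.mul_assoc, hQinvR, Matrix.one_mul,
        Matrix.mulVec_smul] at h3
      exact h3
    have hdot := congrArg (fun u => star w ⬝ᵥ u) h2
    simp only [dotProduct_smul, smul_eq_mul] at hdot
    have h1 := Stmt19Aux.Umap_dot x L hL_herm hconjF w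
    have h2' := Stmt19Aux.Qmap_dot x L hL_herm hconjF w
    rw [← hUmdef] at h1
    rw [← hQmdef] at h2'
    have h3 : ((Stmt19Aux.Sr x L w - Stmt19Aux.Tr' x L w : ℝ) : ℂ)
        = z * ((Stmt19Aux.Sr x L w + Stmt19Aux.Tr' x L w : ℝ) : ℂ) := by
      linear_combination (-1:ℂ) * h1 + 2 * hdot + z * h2'
    have hre := congrArg Complex.re h3
    simp only [Complex.mul_re, Complex.sub_re, Complex.add_re, Complex.sub_im,
      Complex.add_im, Complex.ofReal_re, Complex.ofReal_im, mul_zero, sub_zero,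
      add_zero, neg_zero] at hre
    have hAmw : Stmt19Aux.Am L w ≠ 0 := fun h => hw (hA0 w h)
    have hTpos := Stmt19Aux.Tr'_pos x L hx_pos w hAmw
    have hSnn := Stmt19Aux.Sr_nonneg x L hx_pos w
    have hkey := Stmt19Aux.key_ineq x L Δ hcoef w
    nlinarith [hre, hTpos, hSnn, hkey]
end
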